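/- Let R be a nominal rewrite system that is E-terminating, and suppose R,E is E-confluent. Then for every term-in-context Δ ⊢ t, every R,E-normal form of t and every R/E-normal form of t (under Δ) are E-equal, if and only if the relation →R,E is E-coherent. -/

import Mathlib

namespace NominalNarrowing

/-- Atoms (object-level names). -/
abbrev Atom := ℕ
/-- (Meta-level) variables. -/
abbrev Var := ℕ

/-- A finite permutation of atoms, represented as a list of swaps. -/
abbrev Perm := List (Atom × Atom)

/-- Action of a single swap on an atom. -/
def swapAtom (p : Atom × Atom) (a : Atom) : Atom :=
  if a = p.1 then p.2 else if a = p.2 then p.1 else a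

/-- Action of a permutation (list of swaps) on an atom. -/
def permAtom (π : Perm) (a : Atom) : Atom := π.foldr swapAtom a

/-- Nominal terms over a signature `F`. -/
inductive Term (F : Type) where
  | atom : Atom → Term F
  | var  : Perm → Var → Term F
  | abs  : Atom → Term F → Term F
  | fn   : F → List (Term F) → Term F

variable {F : Type}

/-- Permutation action on terms. -/
def permTerm (π : Perm) : Term F → Term F
  | .atom a => .atom (permAtom π a)
  | .var π' X => .var (π ++ π') X
  | .abs a t => .abs (permAtom π a) (permTerm π t)
  | .fn f ts => .fn f (ts.attach.map fun x => permTerm π x.1)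
decreasing_by
  all_goals simp
  all_goals (have := List.sizeOf_lt_of_mem x.2; omega)

/-- Substitutions map variables to terms. -/
abbrev Subst (F : Type) := Var → Term F

/-- Substitution action on terms (possibly capturing). -/
def applySubst (θ : Subst F) : Term F → Term F
  | .atom a => .atom a
  | .var π X => permTerm π (θ X)
  | .abs a t => .abs a (applySubst θ t)
  | .fn f ts => .fn f (ts.attach.map fun x => applySubst θ x.1)
decreasing_by
  all_goals simp
  all_goals (have := List.sizeOf_lt_of_mem x.2; omega)

/-- The identity substitution. -/
def idSubst : Subst F := fun X => .var [] X

/-- Composition of substitutions: `X (compSubst σ τ) = (X σ) τ`. -/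
def compSubst (σ τ : Subst F) : Subst F := fun X => applySubst τ (σ X)

/-- Composition `θ₀θ₁…θ_{n-1}` of a sequence of substitutions. -/
def compAll (θseq : ℕ → Subst F) (n : ℕ) : Subst F :=
  ((List.range n).map θseq).foldr compSubst idSubst

/-- Atoms occurring in a term (including those in permutation moderations). -/
def Term.atoms : Term F → Finset Atom
  | .atom a => {a}
  | .var π _ => (π.map Prod.fst).toFinset ∪ (π.map Prod.snd).toFinset
  | .abs a t => insert a t.atoms
  | .fn _ ts => (ts.attach.map fun x => Term.atoms x.1).foldr (· ∪ ·) ∅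
decreasing_by
  all_goals simp
  all_goals (have := List.sizeOf_lt_of_mem x.2; omega)

/-- Variables occurring in a term. -/
def Term.vars : Term F → Finset Var
  | .atom _ => ∅
  | .var _ X => {X}
  | .abs _ t => t.vars
  | .fn _ ts => (ts.attach.map fun x => Term.vars x.1).foldr (· ∪ ·) ∅
decreasing_by
  all_goals simp
  all_goals (have := List.sizeOf_lt_of_mem x.2; omega)

/-- A freshness context: a finite set of primitive constraints `a#X`. -/
abbrev Ctx := Finset (Atom × Var)

def ctxAtoms (Δ : Ctx) : Finset Atom := Δ.image Prod.fst
def ctxVars (Δ : Ctx) : Finset Var := Δ.image Prod.snd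

/-- The freshness judgement `Δ ⊢ a # t`. -/
inductive Fresh (Δ : Ctx) : Atom → Term F → Prop
  | atom {a b : Atom} : a ≠ b → Fresh Δ a (.atom b)
  | var {π : Perm} {a : Atom} {X : Var} :
      (permAtom π.reverse a, X) ∈ Δ → Fresh Δ a (.var π X)
  | abs_same {a : Atom} {t : Term F} : Fresh Δ a (.abs a t)
  | abs_diff {a b : Atom} {t : Term F} : a ≠ b → Fresh Δ a t → Fresh Δ a (.abs b t)
  | fn {a : Atom} {f : F} {ts : List (Term F)} :
      (∀ t ∈ ts, Fresh Δ a t) → Fresh Δ a (.fn f ts)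

/-- The α-equivalence judgement `Δ ⊢ s ≈α t`. -/
inductive Aeq (Δ : Ctx) : Term F → Term F → Prop
  | atom (a : Atom) : Aeq Δ (.atom a) (.atom a)
  | var {π π' : Perm} {X : Var} :
      (∀ a : Atom, permAtom π a ≠ permAtom π' a → (a, X) ∈ Δ) →
      Aeq Δ (.var π X) (.var π' X)
  | fn {f : F} {ts ss : List (Term F)} :
      List.Forall₂ (Aeq Δ) ts ss → Aeq Δ (.fn f ts) (.fn f ss)
  | abs_same {a : Atom} {t s : Term F} : Aeq Δ t s → Aeq Δ (.abs a t) (.abs a s)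
  | abs_diff {a b : Atom} {t s : Term F} :
      a ≠ b → Aeq Δ t (permTerm [(a, b)] s) → Fresh Δ a s →
      Aeq Δ (.abs a t) (.abs b s)

/-- `SatCtx Δ' θ Δ` means `Δ' ⊢ Δθ`, i.e. `Δ' ⊢ a # Xθ` for each `a#X ∈ Δ`.
    (Equivalently, θ satisfies Δ with Δ'.) -/
def SatCtx (Δ' : Ctx) (θ : Subst F) (Δ : Ctx) : Prop :=
  ∀ p ∈ Δ, Fresh Δ' p.1 (θ p.2)

/-- A rule (or identity) in context: `Nab ⊢ l → r` (resp. `Nab ⊢ l ≈ r`). -/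
abbrev Rule (F : Type) := Ctx × Term F × Term F

/-- Permutation action on contexts. -/
def permCtx (π : Perm) (Δ : Ctx) : Ctx := Δ.image fun p => (permAtom π p.1, p.2)

/-- Permutation action on rules/identities. -/
def permRule (π : Perm) (r : Rule F) : Rule F :=
  (permCtx π r.1, permTerm π r.2.1, permTerm π r.2.2)

/-- An equivariant set of rules/identities. -/
def Equivariant (S : Set (Rule F)) : Prop := ∀ (π : Perm), ∀ r ∈ S, permRule π r ∈ S

/-- A set of identities closed under symmetry. -/
def SymmClosed (S : Set (Rule F)) : Prop := ∀ r ∈ S, ((r.1, r.2.2, r.2.1) : Rule F) ∈ S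

/-- Subterm of `t` at position `p` (positions as paths). -/
def subtermAt : List ℕ → Term F → Option (Term F)
  | [], t => some t
  | 0 :: p, .abs _ t => subtermAt p t
  | i :: p, .fn _ ts => (ts[i]?).bind fun u => subtermAt p u
  | _, _ => none

/-- Replace the subterm of `t` at position `p` by `new` (the paper's `C[new]`). -/
def replaceAt : List ℕ → Term F → Term F → Option (Term F)
  | [], _, new => some new
  | 0 :: p, .abs a t, new => (replaceAt p t new).map (Term.abs a)
  | i :: p, .fn f ts, new =>
      (ts[i]?).bind fun u => (replaceAt p u new).map fun u' => Term.fn f (ts.set i u')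
  | _, _, _ => none

/-- One-step equality `Δ ⊢ s ≈E t` generated by the identities `E`. -/
def EqStep (E : Set (Rule F)) (Δ : Ctx) (s t : Term F) : Prop :=
  ∃ ax ∈ E, ∃ (p : List ℕ) (θ : Subst F) (Γ : Ctx) (w w' : Term F),
    (∀ c ∈ Γ, c.1 ∉ ctxAtoms Δ ∪ s.atoms ∪ t.atoms) ∧
    SatCtx (Δ ∪ Γ) θ ax.1 ∧
    subtermAt p w = some (applySubst θ ax.2.1) ∧
    Aeq (Δ ∪ Γ) s w ∧
    replaceAt p w (applySubst θ ax.2.2) = some w' ∧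
    Aeq (Δ ∪ Γ) w' t

/-- The equational theory `Δ ⊢ s ≈E t` : reflexive-transitive closure of one-step
    equality (with α-equivalence embedded). -/
def EqE (E : Set (Rule F)) (Δ : Ctx) : Term F → Term F → Prop :=
  Relation.ReflTransGen (fun s t => EqStep E Δ s t ∨ Aeq Δ s t)

/-- Symmetric closure of a set of identities. -/
def symmCl (S : Set (Rule F)) : Set (Rule F) :=
  S ∪ {r | ∃ q ∈ S, r = ((q.1, q.2.2, q.2.1) : Rule F)}

/-- The equational theory `≈T` generated by `R ∪ E` together with α-equivalence. -/
def EqT (R E : Set (Rule F)) (Δ : Ctx) : Term F → Term F → Prop :=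
  EqE (symmCl (R ∪ E)) Δ

/-- Rewriting with a given rule at a given position, matching modulo `E`:
    the core of `Δ ⊢ s →R,E t`. -/
def RewAt (E : Set (Rule F)) (Δ : Ctx) (r : Rule F) (p : List ℕ) (s t : Term F) : Prop :=
  ∃ (s' u : Term F) (θ : Subst F),
    subtermAt p s = some s' ∧
    SatCtx Δ θ r.1 ∧
    EqE E Δ s' (applySubst θ r.2.1) ∧
    replaceAt p s (applySubst θ r.2.2) = some u ∧
    Aeq Δ u t

/-- Rewriting with a given rule at a given position, matching modulo α only:
    the core of plain nominal rewriting `Δ ⊢ s →R t`. -/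
def RewAtR (Δ : Ctx) (r : Rule F) (p : List ℕ) (s t : Term F) : Prop :=
  ∃ (s' u : Term F) (θ : Subst F),
    subtermAt p s = some s' ∧
    SatCtx Δ θ r.1 ∧
    Aeq Δ s' (applySubst θ r.2.1) ∧
    replaceAt p s (applySubst θ r.2.2) = some u ∧
    Aeq Δ u t

/-- Plain nominal rewriting `Δ ⊢ s →R t`. -/
def RewR (R : Set (Rule F)) (Δ : Ctx) (s t : Term F) : Prop :=
  ∃ r ∈ R, ∃ p : List ℕ, RewAtR Δ r p s t

/-- Nominal rewriting modulo `E`: `Δ ⊢ s →R,E t`. -/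
def RewRE (R E : Set (Rule F)) (Δ : Ctx) (s t : Term F) : Prop :=
  ∃ r ∈ R, ∃ p : List ℕ, RewAt E Δ r p s t

/-- The relation `→R/E  =  ≈E ∘ →R ∘ ≈E`. -/
def RewRmodE (R E : Set (Rule F)) (Δ : Ctx) (s t : Term F) : Prop :=
  ∃ s' t', EqE E Δ s s' ∧ RewR R Δ s' t' ∧ EqE E Δ t' t

/-- One-step nominal narrowing with a given rule at a given position, modulo `E`. -/
def NarrAt (E : Set (Rule F)) (Δ : Ctx) (r : Rule F) (p : List ℕ) (s : Term F)
    (θ : Subst F) (Δ' : Ctx) (t : Term F) : Prop :=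
  ∃ (s' u : Term F),
    subtermAt p s = some s' ∧
    SatCtx Δ' θ r.1 ∧
    SatCtx Δ' θ Δ ∧
    EqE E Δ' (applySubst θ s') (applySubst θ r.2.1) ∧
    replaceAt p s r.2.2 = some u ∧
    Aeq Δ' (applySubst θ u) t

/-- One-step nominal narrowing with a given rule at a given position (E = ∅, α only). -/
def NarrAtR (Δ : Ctx) (r : Rule F) (p : List ℕ) (s : Term F)
    (θ : Subst F) (Δ' : Ctx) (t : Term F) : Prop :=
  ∃ (s' u : Term F),
    subtermAt p s = some s' ∧
    SatCtx Δ' θ r.1 ∧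
    SatCtx Δ' θ Δ ∧
    Aeq Δ' (applySubst θ s') (applySubst θ r.2.1) ∧
    replaceAt p s r.2.2 = some u ∧
    Aeq Δ' (applySubst θ u) t

/-- One-step nominal `R,E`-narrowing `(Δ ⊢ s) ⤳θ (Δ' ⊢ t)`. -/
def NarrRE (R E : Set (Rule F)) (Δ : Ctx) (s : Term F) (θ : Subst F)
    (Δ' : Ctx) (t : Term F) : Prop :=
  ∃ r ∈ R, ∃ p : List ℕ, NarrAt E Δ r p s θ Δ' t

/-- One-step plain nominal narrowing (E = ∅). -/
def NarrR (R : Set (Rule F)) (Δ : Ctx) (s : Term F) (θ : Subst F)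
    (Δ' : Ctx) (t : Term F) : Prop :=
  ∃ r ∈ R, ∃ p : List ℕ, NarrAtR Δ r p s θ Δ' t

/-! ### Freshened variants and closed rules -/

def ruleAtoms (r : Rule F) : Finset Atom := ctxAtoms r.1 ∪ r.2.1.atoms ∪ r.2.2.atoms
def ruleVars (r : Rule F) : Finset Var := ctxVars r.1 ∪ r.2.1.vars ∪ r.2.2.vars

/-- Renaming of atoms and variables in a term. -/
def renameTerm (fa : Atom → Atom) (fv : Var → Var) : Term F → Term F
  | .atom a => .atom (fa a)
  | .var π X => .var (π.map fun p => (fa p.1, fa p.2)) (fv X)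
  | .abs a t => .abs (fa a) (renameTerm fa fv t)
  | .fn f ts => .fn f (ts.attach.map fun x => renameTerm fa fv x.1)
decreasing_by
  all_goals simp
  all_goals (have := List.sizeOf_lt_of_mem x.2; omega)

def renameCtx (fa : Atom → Atom) (fv : Var → Var) (Δ : Ctx) : Ctx :=
  Δ.image fun p => (fa p.1, fv p.2)

def renameRule (fa : Atom → Atom) (fv : Var → Var) (r : Rule F) : Rule F :=
  (renameCtx fa fv r.1, renameTerm fa fv r.2.1, renameTerm fa fv r.2.2)

/-- `r'` is a freshened variant of `r`, with fresh atoms/variables avoiding `A`/`V`. -/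
def IsFreshenedAway (r r' : Rule F) (A : Finset Atom) (V : Finset Var) : Prop :=
  ∃ (fa : Atom → Atom) (fv : Var → Var),
    Function.Injective fa ∧ Function.Injective fv ∧
    (∀ a ∈ ruleAtoms r, fa a ∉ A ∪ ruleAtoms r) ∧
    (∀ X ∈ ruleVars r, fv X ∉ V ∪ ruleVars r) ∧
    r' = renameRule fa fv r

/-- A rule (or axiom) `Nab ⊢ l → r` is closed: any freshened variant matches back. -/
def ClosedRule (r : Rule F) : Prop :=
  ∀ r' : Rule F, IsFreshenedAway r r' (ruleAtoms r) (ruleVars r) →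
    ∃ θ : Subst F,
      SatCtx (r.1 ∪ (ruleAtoms r') ×ˢ ruleVars r) θ r'.1 ∧
      Aeq (r.1 ∪ (ruleAtoms r') ×ˢ ruleVars r) (applySubst θ r'.2.1) r.2.1 ∧
      Aeq (r.1 ∪ (ruleAtoms r') ×ˢ ruleVars r) (applySubst θ r'.2.2) r.2.2

def ClosedSet (S : Set (Rule F)) : Prop := ∀ r ∈ S, ClosedRule r

/-- Closed rewriting at a rule/position, modulo `E`: uses a freshened variant of the
rule and the extended freshness context `Δ, A(R̂)#V(Δ,s,t)`. -/
def CRewAt (E : Set (Rule F)) (Δ : Ctx) (r : Rule F) (p : List ℕ) (s t : Term F) : Prop :=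
  ∃ r' : Rule F,
    IsFreshenedAway r r' (ctxAtoms Δ ∪ s.atoms ∪ t.atoms) (ctxVars Δ ∪ s.vars ∪ t.vars) ∧
    RewAt E (Δ ∪ (ruleAtoms r') ×ˢ (ctxVars Δ ∪ s.vars ∪ t.vars)) r' p s t

/-- Closed rewriting at a rule/position, modulo α only. -/
def CRewAtR (Δ : Ctx) (r : Rule F) (p : List ℕ) (s t : Term F) : Prop :=
  ∃ r' : Rule F,
    IsFreshenedAway r r' (ctxAtoms Δ ∪ s.atoms ∪ t.atoms) (ctxVars Δ ∪ s.vars ∪ t.vars) ∧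
    RewAtR (Δ ∪ (ruleAtoms r') ×ˢ (ctxVars Δ ∪ s.vars ∪ t.vars)) r' p s t

/-- One-step closed `R,E`-rewriting `Δ ⊢ s →c R,E t`. -/
def CRewRE (R E : Set (Rule F)) (Δ : Ctx) (s t : Term F) : Prop :=
  ∃ r ∈ R, ∃ p : List ℕ, CRewAt E Δ r p s t

/-- One-step closed nominal rewriting (E = ∅). -/
def CRewR (R : Set (Rule F)) (Δ : Ctx) (s t : Term F) : Prop :=
  ∃ r ∈ R, ∃ p : List ℕ, CRewAtR Δ r p s t

/-- Closed narrowing at a rule/position modulo `E`: conditions are checked in the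
extended context `Δ', A(R̂)#V(Δ,s,t)`. -/
def CNarrAt (E : Set (Rule F)) (Δ : Ctx) (r : Rule F) (p : List ℕ) (s : Term F)
    (θ : Subst F) (Δ' : Ctx) (t : Term F) : Prop :=
  ∃ r' : Rule F,
    IsFreshenedAway r r' (ctxAtoms Δ ∪ s.atoms ∪ t.atoms) (ctxVars Δ ∪ s.vars ∪ t.vars) ∧
    NarrAt E Δ r' p s θ (Δ' ∪ (ruleAtoms r') ×ˢ (ctxVars Δ ∪ s.vars ∪ t.vars)) t

/-- Closed narrowing at a rule/position, modulo α only. -/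
def CNarrAtR (Δ : Ctx) (r : Rule F) (p : List ℕ) (s : Term F)
    (θ : Subst F) (Δ' : Ctx) (t : Term F) : Prop :=
  ∃ r' : Rule F,
    IsFreshenedAway r r' (ctxAtoms Δ ∪ s.atoms ∪ t.atoms) (ctxVars Δ ∪ s.vars ∪ t.vars) ∧
    NarrAtR Δ r' p s θ (Δ' ∪ (ruleAtoms r') ×ˢ (ctxVars Δ ∪ s.vars ∪ t.vars)) t

/-- One-step closed `R,E`-narrowing `(Δ ⊢ s) ⤳c θ (Δ' ⊢ t)`. -/
def CNarrRE (R E : Set (Rule F)) (Δ : Ctx) (s : Term F) (θ : Subst F)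
    (Δ' : Ctx) (t : Term F) : Prop :=
  ∃ r ∈ R, ∃ p : List ℕ, CNarrAt E Δ r p s θ Δ' t

/-- One-step closed nominal narrowing (E = ∅). -/
def CNarrR (R : Set (Rule F)) (Δ : Ctx) (s : Term F) (θ : Subst F)
    (Δ' : Ctx) (t : Term F) : Prop :=
  ∃ r ∈ R, ∃ p : List ℕ, CNarrAtR Δ r p s θ Δ' t

/-! ### Normal forms and abstract properties -/

def NFRE (R E : Set (Rule F)) (Δ : Ctx) (t : Term F) : Prop := ¬ ∃ u, RewRE R E Δ t u
def NFRmodE (R E : Set (Rule F)) (Δ : Ctx) (t : Term F) : Prop := ¬ ∃ u, RewRmodE R E Δ t u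
def NFR (R : Set (Rule F)) (Δ : Ctx) (t : Term F) : Prop := ¬ ∃ u, RewR R Δ t u

/-- `R` is E-terminating: there is no infinite `→R/E` sequence. -/
def ETerminating (R E : Set (Rule F)) : Prop :=
  ∀ Δ : Ctx, ¬ ∃ f : ℕ → Term F, ∀ n, RewRmodE R E Δ (f n) (f (n + 1))

/-- `R` is E-confluent (confluence of `→R/E` modulo `E`). -/
def EConfluentRmodE (R E : Set (Rule F)) : Prop :=
  ∀ (Δ : Ctx) (s t u : Term F),
    Relation.ReflTransGen (RewRmodE R E Δ) s t →
    Relation.ReflTransGen (RewRmodE R E Δ) s u →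
    ∃ t' u', Relation.ReflTransGen (RewRmodE R E Δ) t t' ∧
      Relation.ReflTransGen (RewRmodE R E Δ) u u' ∧ EqE E Δ t' u'

/-- `R,E` is E-confluent (confluence of `→R,E` modulo `E`). -/
def EConfluentRE (R E : Set (Rule F)) : Prop :=
  ∀ (Δ : Ctx) (s t u : Term F),
    Relation.ReflTransGen (RewRE R E Δ) s t →
    Relation.ReflTransGen (RewRE R E Δ) s u →
    ∃ t' u', Relation.ReflTransGen (RewRE R E Δ) t t' ∧
      Relation.ReflTransGen (RewRE R E Δ) u u' ∧ EqE E Δ t' u'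

/-- `R` is E-convergent: E-confluent and E-terminating. -/
def EConvergent (R E : Set (Rule F)) : Prop := EConfluentRmodE R E ∧ ETerminating R E

/-- `→R,E` is E-coherent. -/
def ECoherent (R E : Set (Rule F)) : Prop :=
  ∀ (Δ : Ctx) (t₁ t₂ t₃ : Term F), EqE E Δ t₁ t₂ → RewRE R E Δ t₁ t₃ →
    ∃ t₄ t₅ t₆, Relation.ReflTransGen (RewRE R E Δ) t₃ t₄ ∧
      RewRE R E Δ t₂ t₅ ∧ Relation.ReflTransGen (RewRE R E Δ) t₅ t₆ ∧
      EqE E Δ t₄ t₆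

/-- `→R` is terminating. -/
def Terminating (R : Set (Rule F)) : Prop :=
  ∀ Δ : Ctx, ¬ ∃ f : ℕ → Term F, ∀ n, RewR R Δ (f n) (f (n + 1))

/-- `→R` is confluent (modulo α). -/
def Confluent (R : Set (Rule F)) : Prop :=
  ∀ (Δ : Ctx) (s t u : Term F),
    Relation.ReflTransGen (RewR R Δ) s t →
    Relation.ReflTransGen (RewR R Δ) s u →
    ∃ t' u', Relation.ReflTransGen (RewR R Δ) t t' ∧
      Relation.ReflTransGen (RewR R Δ) u u' ∧ Aeq Δ t' u'

/-- `R` is convergent: terminating and confluent. -/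
def Convergent (R : Set (Rule F)) : Prop := Terminating R ∧ Confluent R

/-! ### E-unification -/

/-- `(Δ',θ)` is an E-unifier of `(Nab ⊢ l)` and `(Δ ⊢ s)`. -/
def EUnifier (E : Set (Rule F)) (Nab : Ctx) (l : Term F) (Δ : Ctx) (s : Term F)
    (sol : Ctx × Subst F) : Prop :=
  SatCtx sol.1 sol.2 Nab ∧ SatCtx sol.1 sol.2 Δ ∧
  EqE E sol.1 (applySubst sol.2 l) (applySubst sol.2 s)

/-- `(Δ₁,θ₁) ≤E (Δ₂,θ₂)`: `(Δ₁,θ₁)` is more general than `(Δ₂,θ₂)`. -/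
def LeE (E : Set (Rule F)) (p q : Ctx × Subst F) : Prop :=
  ∃ θ' : Subst F, (∀ X : Var, EqE E q.1 (applySubst θ' (p.2 X)) (q.2 X)) ∧
    SatCtx q.1 θ' p.1

/-- `≤E` restricted to a finite set `V` of variables. -/
def LeEV (E : Set (Rule F)) (V : Finset Var) (p q : Ctx × Subst F) : Prop :=
  ∃ θ' : Subst F, (∀ X ∈ V, EqE E q.1 (applySubst θ' (p.2 X)) (q.2 X)) ∧
    SatCtx q.1 θ' p.1

/-- A complete E-unification algorithm exists: every E-unification problem has a
complete set of E-solutions. -/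
def CompleteEUnifAlg (E : Set (Rule F)) : Prop :=
  ∀ (Nab : Ctx) (l : Term F) (Δ : Ctx) (s : Term F),
    ∃ S : Set (Ctx × Subst F),
      (∀ sol ∈ S, EUnifier E Nab l Δ s sol) ∧
      ∀ sol, EUnifier E Nab l Δ s sol → ∃ p ∈ S, LeE E p sol

/-- `R ∪ E_α` is well-structured: `R` is E-convergent and a complete E-unification
algorithm exists. -/
def WellStructured (R E : Set (Rule F)) : Prop := EConvergent R E ∧ CompleteEUnifAlg E

/-- `θ` is normalised in `Δ` w.r.t. `→R,E`. -/
def NormalisedRE (R E : Set (Rule F)) (Δ : Ctx) (θ : Subst F) : Prop :=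
  ∀ X : Var, NFRE R E Δ (θ X)

/-- `θ` is normalised in `Δ` w.r.t. `→R`. -/
def NormalisedR (R : Set (Rule F)) (Δ : Ctx) (θ : Subst F) : Prop :=
  ∀ X : Var, NFR R Δ (θ X)

/-- The domain of a substitution. -/
def domSubst (θ : Subst F) : Set Var := {X | θ X ≠ Term.var [] X}

/-! ### Positions, basedness, innermost -/

/-- Ground (non-variable) positions of a term. -/
def groundPos (t : Term F) : Set (List ℕ) :=
  {p | ∃ u, subtermAt p t = some u ∧ ∀ (π : Perm) (X : Var), u ≠ Term.var π X}

/-- The update of the set of basic positions after a step at position `p`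
with a rule whose right-hand side is `rhs`. -/
def nextU (U : Set (List ℕ)) (p : List ℕ) (rhs : Term F) : Set (List ℕ) :=
  (U \ {q | q ∈ U ∧ p <+: q}) ∪ {q | ∃ q' ∈ groundPos rhs, q = p ++ q'}

/-- A (finite) derivation reducing at positions `pseq` with rules whose right-hand
sides are `rhs` is based on `U₀`. -/
def BasedSeq (U₀ : Set (List ℕ)) (n : ℕ) (pseq : ℕ → List ℕ) (rhs : ℕ → Term F) : Prop :=
  ∃ U : ℕ → Set (List ℕ), U 0 = U₀ ∧
    ∀ i < n, pseq i ∈ U i ∧ U (i + 1) = nextU (U i) (pseq i) (rhs i)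

/-- An infinite derivation based on `U₀` (for non-termination statements). -/
def BasedInf (U₀ : Set (List ℕ)) (pseq : ℕ → List ℕ) (rhs : ℕ → Term F) : Prop :=
  ∃ U : ℕ → Set (List ℕ), U 0 = U₀ ∧
    ∀ i, pseq i ∈ U i ∧ U (i + 1) = nextU (U i) (pseq i) (rhs i)

/-- A rewrite step at position `p` in `s` is innermost (no `→R` step strictly below). -/
def InnermostAt (R : Set (Rule F)) (Δ : Ctx) (p : List ℕ) (s : Term F) : Prop :=
  ∀ q : List ℕ, p <+: q → p ≠ q → ¬ ∃ r ∈ R, ∃ t, RewAtR Δ r q s t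

/-- A closed rewrite step at position `p` in `s` is innermost. -/
def CInnermostAt (R : Set (Rule F)) (Δ : Ctx) (p : List ℕ) (s : Term F) : Prop :=
  ∀ q : List ℕ, p <+: q → p ≠ q → ¬ ∃ r ∈ R, ∃ t, CRewAtR Δ r q s t

/-!
Write `≈` for `≈E`, `→` for `→R,E` and `⇒` for `→R/E = ≈ ∘ →R ∘ ≈`. Since `→R ⊆ → ⊆ ⇒`, the
relation `→` terminates and `⇒`-normal forms are `→`-normal. If `→` is coherent, then
`≈`-equal terms have `≈`-equal `→`-normal forms, by well-founded induction using coherence and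
confluence; a `⇒`-reduction `t ⇒ t' ⇒* v` to a normal form is then followed by the `→`-normal
forms of `t` and `t'`. Conversely, applying the agreement of normal forms to `t₁` and `t₂`
yields the terms required by coherence.

The nominal content is the inclusion `→ ⊆ ⇒`, i.e. that `≈` is closed under contexts. An
`E`-step may use freshness constraints on auxiliary atoms `b` that occur in the surrounding
context, so these are renamed away one at a time. For fresh `c₁, c₂` and the cycle
`ν = (b c₁ c₂)`, the map `t ↦ ν⁻¹ · t[X ↦ ν · X]` leaves every term avoiding `b, c₁, c₂`
unchanged up to `≈α` (`ν` commutes with its suspensions), turns the constraints `b # X` into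
`c₂ # X`, and sends an occurrence of `b` in the identity's context to `c₂`, which is fresh for
`ν · X` once `c₁ # X` is assumed.
-/

section AbstractRewriting

open Relation

variable {α : Type*}

def IsNormal (q : α → α → Prop) (a : α) : Prop := ¬ ∃ b, q a b

/-- `e ∘ r ∘ e`; the relation `→R/E` is `RelModulo (→R) (≈E)`. -/
def RelModulo (r e : α → α → Prop) (a b : α) : Prop := ∃ a' b', e a a' ∧ r a' b' ∧ e b' b

def ConfluentModulo (s e : α → α → Prop) : Prop :=
  ∀ a b c, ReflTransGen s a b → ReflTransGen s a c →
    ∃ b' c', ReflTransGen s b b' ∧ ReflTransGen s c c' ∧ e b' c'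

def CoherentModulo (s e : α → α → Prop) : Prop :=
  ∀ t₁ t₂ t₃, e t₁ t₂ → s t₁ t₃ →
    ∃ t₄ t₅ t₆, ReflTransGen s t₃ t₄ ∧ s t₂ t₅ ∧ ReflTransGen s t₅ t₆ ∧ e t₄ t₆

theorem exists_reflTransGen_isNormal {q : α → α → Prop} (hwf : WellFounded (flip q)) (a : α) :
    ∃ b, ReflTransGen q a b ∧ IsNormal q b := by
  induction a using hwf.induction with
  | _ a ih =>
    by_cases ha : IsNormal q a
    · exact ⟨a, .refl, ha⟩
    · obtain ⟨b, hab⟩ := not_not.1 ha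
      obtain ⟨c, hbc, hc⟩ := ih b hab
      exact ⟨c, .head hab hbc, hc⟩

theorem IsNormal.eq_of_reflTransGen {q : α → α → Prop} {a b : α} (ha : IsNormal q a)
    (h : ReflTransGen q a b) : b = a := by
  rcases h.cases_head with rfl | ⟨c, hac, -⟩
  · rfl
  · exact absurd ⟨c, hac⟩ ha

variable {r s e : α → α → Prop}

theorem IsNormal.of_subrelation (h : ∀ {a b}, s a b → r a b) {a : α} (ha : IsNormal r a) :
    IsNormal s a :=
  fun ⟨b, hab⟩ => ha ⟨b, h hab⟩

theorem ConfluentModulo.related_of_isNormal (hconf : ConfluentModulo s e) {a u v : α}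
    (hu : ReflTransGen s a u) (hun : IsNormal s u) (hv : ReflTransGen s a v)
    (hvn : IsNormal s v) : e u v := by
  obtain ⟨u', v', hu', hv', huv⟩ := hconf a u v hu hv
  rwa [hun.eq_of_reflTransGen hu', hvn.eq_of_reflTransGen hv'] at huv

theorem RelModulo.trans_left (he : Equivalence e) {a b c : α} (hab : e a b)
    (hbc : RelModulo r e b c) : RelModulo r e a c :=
  let ⟨b', c', hb, hr, hc⟩ := hbc
  ⟨b', c', he.trans hab hb, hr, hc⟩

section Coherence

variable (he : Equivalence e) (hwf : WellFounded (flip s)) (hconf : ConfluentModulo s e)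
include he hwf hconf

theorem CoherentModulo.related_normalForms (hcoh : CoherentModulo s e) {x y nx ny : α}
    (hxy : e x y) (hx : ReflTransGen s x nx) (hnx : IsNormal s nx)
    (hy : ReflTransGen s y ny) (hny : IsNormal s ny) : e nx ny := by
  induction x using hwf.transGen.induction generalizing y nx ny with
  | _ x ih =>
  by_cases hxn : IsNormal s x
  · have hyn : IsNormal s y := fun ⟨y₁, hyy₁⟩ =>
      let ⟨_, t₅, _, _, hxt₅, _⟩ := hcoh y x y₁ (he.symm hxy) hyy₁
      hxn ⟨t₅, hxt₅⟩
    rwa [hxn.eq_of_reflTransGen hx, hyn.eq_of_reflTransGen hy]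
  obtain ⟨x₁, hxx₁⟩ := not_not.1 hxn
  obtain ⟨t₄, t₅, t₆, h₃₄, hyt₅, h₅₆, h₄₆⟩ := hcoh x y x₁ hxy hxx₁
  obtain ⟨n₄, h₄, hn₄⟩ := exists_reflTransGen_isNormal hwf t₄
  obtain ⟨n₆, h₆, hn₆⟩ := exists_reflTransGen_isNormal hwf t₆
  have hbelow : TransGen (flip s) t₄ x :=
    transGen_swap.2 (.head' hxx₁ h₃₄)
  have hx₄ : e nx n₄ := hconf.related_of_isNormal hx hnx (.head hxx₁ (h₃₄.trans h₄)) hn₄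
  have hy₆ : e ny n₆ := hconf.related_of_isNormal hy hny (.head hyt₅ (h₅₆.trans h₆)) hn₆
  exact he.trans hx₄ (he.trans (ih t₄ hbelow h₄₆ h₄ hn₄ h₆ hn₆) (he.symm hy₆))

theorem CoherentModulo.related_of_relModulo (hcoh : CoherentModulo s e)
    (hrs : ∀ {a b}, r a b → s a b) (hsm : ∀ {a b}, s a b → RelModulo r e a b) {x v nx : α}
    (hxv : ReflTransGen (RelModulo r e) x v) (hv : IsNormal (RelModulo r e) v)
    (hx : ReflTransGen s x nx) (hnx : IsNormal s nx) : e nx v := by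
  induction hxv using ReflTransGen.head_induction_on generalizing nx with
  | refl => rw [(hv.of_subrelation hsm).eq_of_reflTransGen hx]; exact he.refl v
  | head hstep _ ih =>
    obtain ⟨a, b, hxa, hab, hbx₂⟩ := hstep
    obtain ⟨nb, hb, hnb⟩ := exists_reflTransGen_isNormal hwf b
    obtain ⟨n₂, h₂, hn₂⟩ := exists_reflTransGen_isNormal hwf _
    have hxb : e nx nb := hcoh.related_normalForms he hwf hconf hxa hx hnx (.head (hrs hab) hb) hnb
    have hb₂ : e nb n₂ := hcoh.related_normalForms he hwf hconf hbx₂ hb hnb h₂ hn₂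
    exact he.trans hxb (he.trans hb₂ (ih h₂ hn₂))

end Coherence

theorem coherentModulo_of_normalForms_related (he : Equivalence e)
    (hsm : ∀ {a b}, s a b → RelModulo r e a b) (hwf : WellFounded (flip (RelModulo r e)))
    (hnf : ∀ t u v, ReflTransGen s t u → IsNormal s u →
      ReflTransGen (RelModulo r e) t v → IsNormal (RelModulo r e) v → e u v) :
    CoherentModulo s e := by
  have hwfs : WellFounded (flip s) := Subrelation.wf hsm hwf
  intro t₁ t₂ t₃ h₁₂ h₁₃
  obtain ⟨u, h₃u, hu⟩ := exists_reflTransGen_isNormal hwfs t₃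
  obtain ⟨v, h₂v, hv⟩ := exists_reflTransGen_isNormal hwf t₂
  have h₂₃ : RelModulo r e t₂ t₃ := (hsm h₁₃).trans_left he (he.symm h₁₂)
  have h₁v : ReflTransGen (RelModulo r e) t₁ v := by
    rcases h₂v.cases_head with rfl | ⟨c, h₂c, hcv⟩
    · exact absurd ⟨t₃, h₂₃⟩ hv
    · exact .head (h₂c.trans_left he h₁₂) hcv
  have huv : e u v := hnf t₁ u v (.head h₁₃ h₃u) hu h₁v hv
  obtain ⟨t₅, h₂₅⟩ : ∃ t₅, s t₂ t₅ := by
    by_contra hn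
    exact hv ⟨t₃, h₂₃.trans_left he (he.symm (hnf t₂ t₂ v .refl hn h₂v hv))⟩
  obtain ⟨t₆, h₅₆, h₆⟩ := exists_reflTransGen_isNormal hwfs t₅
  exact ⟨u, t₅, t₆, h₃u, h₂₅, h₅₆,
    he.trans huv (he.symm (hnf t₂ t₆ v (.head h₂₅ h₅₆) h₆ h₂v hv))⟩

theorem normalForms_related_iff_coherentModulo (he : Equivalence e)
    (hrs : ∀ {a b}, r a b → s a b) (hsm : ∀ {a b}, s a b → RelModulo r e a b)
    (hwf : WellFounded (flip (RelModulo r e))) (hconf : ConfluentModulo s e) :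
    (∀ t u v, ReflTransGen s t u → IsNormal s u →
      ReflTransGen (RelModulo r e) t v → IsNormal (RelModulo r e) v → e u v) ↔
    CoherentModulo s e :=
  ⟨coherentModulo_of_normalForms_related he hsm hwf, fun hcoh _ _ _ htu hu htv hv =>
    hcoh.related_of_relModulo he (Subrelation.wf hsm hwf) hconf hrs hsm htv hv htu hu⟩

end AbstractRewriting

section TermBasics

@[simp] theorem permTerm_atom (π : Perm) (a : Atom) :
    permTerm π (Term.atom a : Term F) = .atom (permAtom π a) := by rw [permTerm]

@[simp] theorem permTerm_var (π π' : Perm) (X : Var) :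
    permTerm π (Term.var π' X : Term F) = .var (π ++ π') X := by rw [permTerm]

@[simp] theorem permTerm_abs (π : Perm) (a : Atom) (t : Term F) :
    permTerm π (Term.abs a t) = .abs (permAtom π a) (permTerm π t) := by rw [permTerm]

@[simp] theorem permTerm_fn (π : Perm) (f : F) (ts : List (Term F)) :
    permTerm π (Term.fn f ts) = .fn f (ts.map (permTerm π)) := by
  rw [permTerm, List.attach_map_val]

@[simp] theorem applySubst_atom (θ : Subst F) (a : Atom) :
    applySubst θ (Term.atom a : Term F) = .atom a := by rw [applySubst]

@[simp] theorem applySubst_var (θ : Subst F) (π : Perm) (X : Var) :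
    applySubst θ (Term.var π X : Term F) = permTerm π (θ X) := by rw [applySubst]

@[simp] theorem applySubst_abs (θ : Subst F) (a : Atom) (t : Term F) :
    applySubst θ (Term.abs a t) = .abs a (applySubst θ t) := by rw [applySubst]

@[simp] theorem applySubst_fn (θ : Subst F) (f : F) (ts : List (Term F)) :
    applySubst θ (Term.fn f ts) = .fn f (ts.map (applySubst θ)) := by
  rw [applySubst, List.attach_map_val]

@[simp] theorem atoms_atom (a : Atom) : (Term.atom a : Term F).atoms = {a} := by rw [Term.atoms]

@[simp] theorem atoms_var (π : Perm) (X : Var) :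
    (Term.var π X : Term F).atoms = (π.map Prod.fst).toFinset ∪ (π.map Prod.snd).toFinset := by
  rw [Term.atoms]

@[simp] theorem atoms_abs (a : Atom) (t : Term F) :
    (Term.abs a t).atoms = insert a t.atoms := by rw [Term.atoms]

@[simp] theorem atoms_fn (f : F) (ts : List (Term F)) :
    (Term.fn f ts).atoms = (ts.map Term.atoms).foldr (· ∪ ·) ∅ := by
  rw [Term.atoms, List.attach_map_val]

@[simp] theorem vars_var (π : Perm) (X : Var) : (Term.var π X : Term F).vars = {X} := by
  rw [Term.vars]

@[simp] theorem vars_abs (a : Atom) (t : Term F) : (Term.abs a t).vars = t.vars := by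
  rw [Term.vars]

@[simp] theorem vars_fn (f : F) (ts : List (Term F)) :
    (Term.fn f ts).vars = (ts.map Term.vars).foldr (· ∪ ·) ∅ := by
  rw [Term.vars, List.attach_map_val]

theorem Term.induction_on {motive : Term F → Prop}
    (atom : ∀ a, motive (.atom a)) (var : ∀ π X, motive (.var π X))
    (abs : ∀ a t, motive t → motive (.abs a t))
    (fn : ∀ f ts, (∀ t ∈ ts, motive t) → motive (.fn f ts)) : ∀ t, motive t
  | .atom a => atom a
  | .var π X => var π X
  | .abs a t => abs a t (Term.induction_on atom var abs fn t)
  | .fn f ts => fn f ts (fun t _ => Term.induction_on atom var abs fn t)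

theorem subset_foldr_union {β : Type} [DecidableEq β] {l : List (Finset β)} {s : Finset β}
    (hs : s ∈ l) : s ⊆ l.foldr (· ∪ ·) ∅ := by
  induction l with
  | nil => simp at hs
  | cons x xs ih =>
    rcases List.mem_cons.1 hs with rfl | hs
    · exact Finset.subset_union_left
    · exact (ih hs).trans Finset.subset_union_right

theorem atoms_subset_atoms_fn {t : Term F} {f : F} {ts : List (Term F)} (h : t ∈ ts) :
    t.atoms ⊆ (Term.fn f ts).atoms := by
  rw [atoms_fn]
  exact subset_foldr_union (List.mem_map_of_mem h)

theorem vars_subset_vars_fn {t : Term F} {f : F} {ts : List (Term F)} (h : t ∈ ts) :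
    t.vars ⊆ (Term.fn f ts).vars := by
  rw [vars_fn]
  exact subset_foldr_union (List.mem_map_of_mem h)

theorem mem_atoms_var {ρ : Perm} {X : Var} {p : Atom × Atom} (hp : p ∈ ρ) :
    p.1 ∈ (Term.var ρ X : Term F).atoms ∧ p.2 ∈ (Term.var ρ X : Term F).atoms := by
  simp only [atoms_var, Finset.mem_union, List.mem_toFinset, List.mem_map]
  exact ⟨.inl ⟨p, hp, rfl⟩, .inr ⟨p, hp, rfl⟩⟩

end TermBasics

section Permutations

@[simp] theorem permAtom_nil (a : Atom) : permAtom [] a = a := rfl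

theorem permAtom_cons (p : Atom × Atom) (π : Perm) (a : Atom) :
    permAtom (p :: π) a = swapAtom p (permAtom π a) := rfl

theorem permAtom_singleton (p : Atom × Atom) (a : Atom) : permAtom [p] a = swapAtom p a := rfl

theorem permAtom_append (π π' : Perm) (a : Atom) :
    permAtom (π ++ π') a = permAtom π (permAtom π' a) := by
  simp [permAtom, List.foldr_append]

@[simp] theorem swapAtom_swapAtom (p : Atom × Atom) (a : Atom) :
    swapAtom p (swapAtom p a) = a := by
  unfold swapAtom
  split_ifs <;> simp_all

@[simp] theorem swapAtom_fst (a b : Atom) : swapAtom (a, b) a = b := by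
  unfold swapAtom
  split_ifs <;> simp_all

@[simp] theorem swapAtom_snd (a b : Atom) : swapAtom (a, b) b = a := by
  unfold swapAtom
  by_cases h : b = a <;> simp [h]

@[simp] theorem swapAtom_self (a x : Atom) : swapAtom (a, a) x = x := by
  unfold swapAtom
  split_ifs <;> simp_all

theorem swapAtom_of_ne {a b x : Atom} (ha : x ≠ a) (hb : x ≠ b) : swapAtom (a, b) x = x := by
  simp [swapAtom, ha, hb]

theorem swapAtom_comm (a b x : Atom) : swapAtom (a, b) x = swapAtom (b, a) x := by
  unfold swapAtom
  split_ifs <;> simp_all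

@[simp] theorem permAtom_permAtom_reverse (π : Perm) (a : Atom) :
    permAtom π (permAtom π.reverse a) = a := by
  induction π generalizing a with
  | nil => rfl
  | cons _ π ih =>
    rw [List.reverse_cons, permAtom_append, permAtom_cons, permAtom_singleton, ih,
      swapAtom_swapAtom]

@[simp] theorem permAtom_reverse_permAtom (π : Perm) (a : Atom) :
    permAtom π.reverse (permAtom π a) = a := by
  simpa using permAtom_permAtom_reverse π.reverse a

theorem permAtom_injective (π : Perm) : Function.Injective (permAtom π) :=
  Function.LeftInverse.injective (permAtom_reverse_permAtom π)

theorem permAtom_eq_self {π : Perm} {a : Atom} (h : ∀ p ∈ π, a ≠ p.1 ∧ a ≠ p.2) :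
    permAtom π a = a := by
  induction π with
  | nil => rfl
  | cons p π ih =>
    obtain ⟨h₁, h₂⟩ := h p List.mem_cons_self
    rw [permAtom_cons, ih fun q hq => h q (List.mem_cons_of_mem p hq)]
    simp [swapAtom, h₁, h₂]

theorem permAtom_eq_self_of_not_mem_atoms {π : Perm} {X : Var} {a : Atom}
    (h : a ∉ (Term.var π X : Term F).atoms) : permAtom π a = a :=
  permAtom_eq_self fun _ hp =>
    ⟨fun he => h (he ▸ (mem_atoms_var hp).1), fun he => h (he ▸ (mem_atoms_var hp).2)⟩

theorem permAtom_eq_self_or_mem_atoms (π : Perm) (X : Var) (a : Atom) :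
    permAtom π a = a ∨ permAtom π a ∈ (Term.var π X : Term F).atoms := by
  by_contra! h
  exact h.1 (permAtom_injective π (permAtom_eq_self_of_not_mem_atoms h.2))

theorem permAtom_swapAtom (π : Perm) (a b x : Atom) :
    permAtom π (swapAtom (a, b) x) = swapAtom (permAtom π a, permAtom π b) (permAtom π x) := by
  unfold swapAtom
  split_ifs <;> simp_all [(permAtom_injective π).eq_iff]

theorem permTerm_permTerm (π π' : Perm) (t : Term F) :
    permTerm π (permTerm π' t) = permTerm (π ++ π') t := by
  induction t using Term.induction_on with
  | atom a => simp [permAtom_append]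
  | var ρ X => simp
  | abs a t ih => simp [permAtom_append, ih]
  | fn f ts ih => simpa using List.map_congr_left ih

@[simp] theorem permTerm_nil (t : Term F) : permTerm [] t = t := by
  induction t using Term.induction_on with
  | atom a => simp
  | var ρ X => simp
  | abs a t ih => simp [ih]
  | fn f ts ih => simpa using List.map_congr_left ih

theorem applySubst_permTerm (θ : Subst F) (π : Perm) (t : Term F) :
    applySubst θ (permTerm π t) = permTerm π (applySubst θ t) := by
  induction t using Term.induction_on with
  | atom a => simp
  | var ρ X => simp [permTerm_permTerm]
  | abs a t ih => simp [ih]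
  | fn f ts ih => simpa using List.map_congr_left ih

theorem applySubst_applySubst (θ θ' : Subst F) (t : Term F) :
    applySubst θ' (applySubst θ t) = applySubst (fun X => applySubst θ' (θ X)) t := by
  induction t using Term.induction_on with
  | atom a => simp
  | var ρ X => simp [applySubst_permTerm]
  | abs a t ih => simp [ih]
  | fn f ts ih => simpa using List.map_congr_left ih

end Permutations

section Positions

@[simp] theorem subtermAt_nil (t : Term F) : subtermAt [] t = some t := rfl
@[simp] theorem subtermAt_atom_cons (i : ℕ) (p : List ℕ) (a : Atom) :
    subtermAt (i :: p) (Term.atom a : Term F) = none := by cases i <;> rfl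
@[simp] theorem subtermAt_var_cons (i : ℕ) (p : List ℕ) (π : Perm) (X : Var) :
    subtermAt (i :: p) (Term.var π X : Term F) = none := by cases i <;> rfl
@[simp] theorem subtermAt_abs_zero (p : List ℕ) (a : Atom) (t : Term F) :
    subtermAt (0 :: p) (Term.abs a t) = subtermAt p t := rfl
@[simp] theorem subtermAt_abs_succ (j : ℕ) (p : List ℕ) (a : Atom) (t : Term F) :
    subtermAt ((j + 1) :: p) (Term.abs a t) = none := rfl
@[simp] theorem subtermAt_fn_cons (i : ℕ) (p : List ℕ) (f : F) (ts : List (Term F)) :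
    subtermAt (i :: p) (Term.fn f ts) = (ts[i]?).bind (subtermAt p) := by cases i <;> rfl

@[simp] theorem replaceAt_nil (t v : Term F) : replaceAt [] t v = some v := rfl
@[simp] theorem replaceAt_atom_cons (i : ℕ) (p : List ℕ) (a : Atom) (v : Term F) :
    replaceAt (i :: p) (Term.atom a : Term F) v = none := by cases i <;> rfl
@[simp] theorem replaceAt_var_cons (i : ℕ) (p : List ℕ) (π : Perm) (X : Var) (v : Term F) :
    replaceAt (i :: p) (Term.var π X : Term F) v = none := by cases i <;> rfl
@[simp] theorem replaceAt_abs_zero (p : List ℕ) (a : Atom) (t v : Term F) :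
    replaceAt (0 :: p) (Term.abs a t) v = (replaceAt p t v).map (Term.abs a) := rfl
@[simp] theorem replaceAt_abs_succ (j : ℕ) (p : List ℕ) (a : Atom) (t v : Term F) :
    replaceAt ((j + 1) :: p) (Term.abs a t) v = none := rfl
@[simp] theorem replaceAt_fn_cons (i : ℕ) (p : List ℕ) (f : F) (ts : List (Term F))
    (v : Term F) : replaceAt (i :: p) (Term.fn f ts) v =
      (ts[i]?).bind fun u => (replaceAt p u v).map fun u' => Term.fn f (ts.set i u') := by
  cases i <;> rfl

theorem subtermAt_replaceAt {p : List ℕ} {s v s' : Term F}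
    (h : replaceAt p s v = some s') : subtermAt p s' = some v := by
  induction p generalizing s s' with
  | nil => simp_all
  | cons i p ih =>
    match s, i with
    | .atom _, _ | .var _ _, _ | .abs _ _, _ + 1 => simp at h
    | .abs a t, 0 =>
      obtain ⟨u, hu, rfl⟩ := Option.map_eq_some_iff.1 h
      simpa using ih hu
    | .fn f ts, i =>
      rw [replaceAt_fn_cons] at h
      obtain ⟨u, hu, h'⟩ := Option.bind_eq_some_iff.1 h
      obtain ⟨u', hu', rfl⟩ := Option.map_eq_some_iff.1 h'
      have hi : i < ts.length := (List.getElem?_eq_some_iff.1 hu).1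
      simpa [hi] using ih hu'

theorem exists_replaceAt {p : List ℕ} {s x : Term F}
    (h : subtermAt p s = some x) (v : Term F) : ∃ s', replaceAt p s v = some s' := by
  induction p generalizing s with
  | nil => exact ⟨v, rfl⟩
  | cons i p ih =>
    match s, i with
    | .atom _, _ | .var _ _, _ | .abs _ _, _ + 1 => simp at h
    | .abs a t, 0 =>
      obtain ⟨u', hu'⟩ := ih h
      exact ⟨.abs a u', by simp [hu']⟩
    | .fn f ts, i =>
      rw [subtermAt_fn_cons] at h
      obtain ⟨u, hu, h'⟩ := Option.bind_eq_some_iff.1 h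
      obtain ⟨u', hu'⟩ := ih h'
      exact ⟨.fn f (ts.set i u'), by simp [hu, hu']⟩

theorem replaceAt_self {p : List ℕ} {s x : Term F}
    (h : subtermAt p s = some x) : replaceAt p s x = some s := by
  induction p generalizing s with
  | nil => simp_all
  | cons i p ih =>
    match s, i with
    | .atom _, _ | .var _ _, _ | .abs _ _, _ + 1 => simp at h
    | .abs a t, 0 => simp [ih h]
    | .fn f ts, i =>
      rw [subtermAt_fn_cons] at h
      obtain ⟨u, hu, h'⟩ := Option.bind_eq_some_iff.1 h
      obtain ⟨hi, rfl⟩ := List.getElem?_eq_some_iff.1 hu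
      simp [hu, ih h', List.set_getElem_self hi]

theorem replaceAt_replaceAt {p : List ℕ} {s v s' : Term F}
    (h : replaceAt p s v = some s') (v' : Term F) :
    replaceAt p s' v' = replaceAt p s v' := by
  induction p generalizing s s' with
  | nil => rfl
  | cons i p ih =>
    match s, i with
    | .atom _, _ | .var _ _, _ | .abs _ _, _ + 1 => simp at h
    | .abs a t, 0 =>
      obtain ⟨u, hu, rfl⟩ := Option.map_eq_some_iff.1 h
      simp [ih hu]
    | .fn f ts, i =>
      rw [replaceAt_fn_cons] at h
      obtain ⟨u, hu, h'⟩ := Option.bind_eq_some_iff.1 h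
      obtain ⟨u', hu', rfl⟩ := Option.map_eq_some_iff.1 h'
      have hi : i < ts.length := (List.getElem?_eq_some_iff.1 hu).1
      simp only [replaceAt_fn_cons, List.getElem?_set_self hi, hu, Option.bind_some, ih hu']
      cases replaceAt p u v' <;> simp

theorem subtermAt_append (p q : List ℕ) (s : Term F) :
    subtermAt (p ++ q) s = (subtermAt p s).bind (subtermAt q) := by
  induction p generalizing s with
  | nil => simp
  | cons i p ih =>
    match s, i with
    | .atom _, _ | .var _ _, _ | .abs _ _, _ + 1 => simp
    | .abs a t, 0 => simpa using ih t
    | .fn f ts, i => cases h : ts[i]? <;> simp [h, ih]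

theorem replaceAt_append {p q : List ℕ} {s u v u' s' : Term F}
    (hsub : subtermAt p s = some u) (hq : replaceAt q u v = some u')
    (hp : replaceAt p s u' = some s') : replaceAt (p ++ q) s v = some s' := by
  induction p generalizing s s' with
  | nil => simp_all
  | cons i p ih =>
    match s, i with
    | .atom _, _ | .var _ _, _ | .abs _ _, _ + 1 => simp at hsub
    | .abs a t, 0 =>
      obtain ⟨w, hw, rfl⟩ := Option.map_eq_some_iff.1 hp
      simp [ih hsub hw]
    | .fn f ts, i =>
      rw [subtermAt_fn_cons] at hsub
      obtain ⟨w, hw, h'⟩ := Option.bind_eq_some_iff.1 hsub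
      simp only [replaceAt_fn_cons, hw, Option.bind_some] at hp
      obtain ⟨w', hw', rfl⟩ := Option.map_eq_some_iff.1 hp
      simp [hw, ih h' hw']

def PreservesShape (g : Term F → Term F) : Prop :=
  (∃ h : Atom → Atom, ∀ a t, g (.abs a t) = .abs (h a) (g t)) ∧
    ∀ f ts, g (.fn f ts) = .fn f (ts.map g)

theorem preservesShape_permTerm (π : Perm) : PreservesShape (permTerm (F := F) π) :=
  ⟨⟨permAtom π, permTerm_abs π⟩, permTerm_fn π⟩

theorem preservesShape_applySubst (θ : Subst F) : PreservesShape (applySubst θ) :=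
  ⟨⟨id, applySubst_abs θ⟩, applySubst_fn θ⟩

theorem PreservesShape.comp {g g' : Term F → Term F} (hg : PreservesShape g)
    (hg' : PreservesShape g') : PreservesShape (g ∘ g') := by
  obtain ⟨⟨h, hh⟩, hfn⟩ := hg
  obtain ⟨⟨h', hh'⟩, hfn'⟩ := hg'
  exact ⟨⟨h ∘ h', fun a t => by simp [hh, hh']⟩, fun f ts => by simp [hfn, hfn']⟩

theorem PreservesShape.subtermAt {g : Term F → Term F} (hg : PreservesShape g) {p : List ℕ}
    {t u : Term F} (h : subtermAt p t = some u) : subtermAt p (g t) = some (g u) := by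
  obtain ⟨⟨hb, habs⟩, hfn⟩ := hg
  induction p generalizing t with
  | nil => simp_all
  | cons i p ih =>
    match t, i with
    | .atom _, _ | .var _ _, _ | .abs _ _, _ + 1 => simp at h
    | .abs a t, 0 => simpa [habs] using ih h
    | .fn f ts, i =>
      rw [subtermAt_fn_cons] at h
      obtain ⟨w, hw, h'⟩ := Option.bind_eq_some_iff.1 h
      simpa [hfn, hw] using ih h'

theorem PreservesShape.replaceAt {g : Term F → Term F} (hg : PreservesShape g) {p : List ℕ}
    {t v t' : Term F} (h : replaceAt p t v = some t') :
    replaceAt p (g t) (g v) = some (g t') := by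
  obtain ⟨⟨hb, habs⟩, hfn⟩ := hg
  induction p generalizing t t' with
  | nil => simp_all
  | cons i p ih =>
    match t, i with
    | .atom _, _ | .var _ _, _ | .abs _ _, _ + 1 => simp at h
    | .abs a t, 0 =>
      obtain ⟨u, hu, rfl⟩ := Option.map_eq_some_iff.1 h
      simp [habs, ih hu]
    | .fn f ts, i =>
      rw [replaceAt_fn_cons] at h
      obtain ⟨u, hu, h'⟩ := Option.bind_eq_some_iff.1 h
      obtain ⟨u', hu', rfl⟩ := Option.map_eq_some_iff.1 h'
      simp [hfn, hu, ih hu', List.map_set]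

end Positions

theorem _root_.List.Forall₂.imp_of_mem_right {α β : Type*} {R S : α → β → Prop}
    {l₁ : List α} {l₂ : List β} (h : List.Forall₂ R l₁ l₂)
    (H : ∀ a b, b ∈ l₂ → R a b → S a b) : List.Forall₂ S l₁ l₂ := by
  induction h with
  | nil => exact .nil
  | cons hab _ ih =>
    exact .cons (H _ _ List.mem_cons_self hab)
      (ih fun a b hb => H a b (List.mem_cons_of_mem _ hb))

theorem _root_.List.Forall₂.exists_of_mem_right {α β : Type*} {R : α → β → Prop}
    {l₁ : List α} {l₂ : List β} (h : List.Forall₂ R l₁ l₂) {b : β} (hb : b ∈ l₂) :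
    ∃ a ∈ l₁, R a b := by
  induction h with
  | nil => simp at hb
  | cons hab _ ih =>
    rcases List.mem_cons.1 hb with rfl | hb
    · exact ⟨_, List.mem_cons_self, hab⟩
    · obtain ⟨a, ha, h⟩ := ih hb
      exact ⟨a, List.mem_cons_of_mem _ ha, h⟩

section AlphaEquivalence

variable {Δ : Ctx}

theorem fresh_permTerm_iff {a : Atom} (π : Perm) (t : Term F) :
    Fresh Δ a (permTerm π t) ↔ Fresh Δ (permAtom π.reverse a) t := by
  induction t using Term.induction_on generalizing a with
  | atom b =>
    rw [permTerm_atom]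
    constructor <;> intro h <;> cases h <;> rename_i hne <;> refine .atom fun he => hne ?_
    · rw [← he, permAtom_permAtom_reverse]
    · rw [he, permAtom_reverse_permAtom]
  | var ρ X =>
    rw [permTerm_var]
    constructor <;> intro h <;> cases h with | var hmem =>
      exact .var (by simpa [List.reverse_append, permAtom_append] using hmem)
  | abs b t ih =>
    rw [permTerm_abs]
    constructor <;> intro h
    · cases h with
      | abs_same => rw [permAtom_reverse_permAtom]; exact .abs_same
      | abs_diff hne hf =>
        exact .abs_diff (fun he => hne (by rw [← he, permAtom_permAtom_reverse])) (ih.1 hf)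
    · cases h with
      | abs_same => rw [permAtom_permAtom_reverse]; exact .abs_same
      | abs_diff hne hf =>
        exact .abs_diff (fun he => hne (by rw [he, permAtom_reverse_permAtom])) (ih.2 hf)
  | fn f ts ih =>
    rw [permTerm_fn]
    constructor <;> intro h <;> cases h <;> rename_i hall <;> refine .fn fun t ht => ?_
    · exact (ih t ht).1 (hall _ (List.mem_map_of_mem ht))
    · obtain ⟨u, hu, rfl⟩ := List.mem_map.1 ht
      exact (ih u hu).2 (hall u hu)

/-- `Aeq` is nested through `List.Forall₂`, which the `induction` tactic does not support. -/
@[elab_as_elim]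
theorem Aeq.induction {motive : (s t : Term F) → Aeq Δ s t → Prop}
    (atom : ∀ a, motive (.atom a) (.atom a) (.atom a))
    (var : ∀ {π π' : Perm} {X : Var} (h : ∀ a, permAtom π a ≠ permAtom π' a → (a, X) ∈ Δ),
      motive (.var π X) (.var π' X) (.var h))
    (fn : ∀ {f ts ss} (h : List.Forall₂ (Aeq Δ) ts ss),
      List.Forall₂ (fun t s => ∃ h : Aeq Δ t s, motive t s h) ts ss →
      motive (.fn f ts) (.fn f ss) (.fn h))
    (abs_same : ∀ {a t s} (h : Aeq Δ t s), motive t s h →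
      motive (.abs a t) (.abs a s) (.abs_same h))
    (abs_diff : ∀ {a b t s} (hab : a ≠ b) (h : Aeq Δ t (permTerm [(a, b)] s))
      (hf : Fresh Δ a s), motive t _ h → motive (.abs a t) (.abs b s) (.abs_diff hab h hf))
    {s t : Term F} (h : Aeq Δ s t) : motive s t h :=
  match s, t, h with
  | _, _, .atom a => atom a
  | _, _, .var h => var h
  | _, _, .fn h => fn h (go h)
  | _, _, .abs_same h => abs_same h (Aeq.induction atom var fn abs_same abs_diff h)
  | _, _, .abs_diff hab h hf => abs_diff hab h hf (Aeq.induction atom var fn abs_same abs_diff h)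
where
  go : ∀ {ts ss : List (Term F)}, List.Forall₂ (Aeq Δ) ts ss →
      List.Forall₂ (fun t s => ∃ h : Aeq Δ t s, motive t s h) ts ss
    | _, _, .nil => .nil
    | _, _, .cons h hs => .cons ⟨h, Aeq.induction atom var fn abs_same abs_diff h⟩ (go hs)

@[refl] theorem Aeq.refl (t : Term F) : Aeq Δ t t := by
  induction t using Term.induction_on with
  | atom a => exact .atom a
  | var π X => exact .var fun a h => absurd rfl h
  | abs a t ih => exact .abs_same ih
  | fn f ts ih => exact .fn (List.forall₂_same.2 ih)

theorem Aeq.fresh {s t : Term F} (h : Aeq Δ s t) {c : Atom} (hc : Fresh Δ c s) :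
    Fresh Δ c t := by
  induction h using Aeq.induction generalizing c with
  | atom => exact hc
  | @var π π' X hd =>
    cases hc with | var hmem =>
    refine .var ?_
    by_cases heq : permAtom π'.reverse c = permAtom π.reverse c
    · rwa [heq]
    · exact hd _ fun he => heq <| permAtom_injective π <| by
        rw [he, permAtom_permAtom_reverse, permAtom_permAtom_reverse]
  | fn _ ih =>
    cases hc with | fn hall =>
    refine .fn fun s hs => ?_
    obtain ⟨t, ht, -, hts⟩ := ih.exists_of_mem_right hs
    exact hts (hall t ht)
  | abs_same _ ih =>
    cases hc with
    | abs_same => exact .abs_same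
    | abs_diff hne hf => exact .abs_diff hne (ih hf)
  | @abs_diff a b t s hab _ hf ih =>
    cases hc with
    | abs_same => exact .abs_diff hab hf
    | abs_diff hca hct =>
      have hcs := (fresh_permTerm_iff _ _).1 (ih hct)
      by_cases hcb : c = b
      · subst hcb; exact .abs_same
      · refine .abs_diff hcb ?_
        simpa [permAtom_singleton, swapAtom, hca, hcb] using hcs

theorem permAtom_cons_ne_permAtom_cons {l₁ l₂ : Perm} {a c x : Atom}
    (h : permAtom ((a, permAtom l₁ c) :: l₁) x ≠ permAtom ((a, permAtom l₂ c) :: l₂) x) :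
    x ≠ c ∧ (permAtom l₁ x ≠ permAtom l₂ x ∨ permAtom l₁ x = a) := by
  rw [permAtom_cons, permAtom_cons] at h
  have hxc : x ≠ c := by rintro rfl; simp at h
  refine ⟨hxc, or_iff_not_imp_left.2 fun h₁₂ => by_contra fun hxa => h ?_⟩
  have h₁ : permAtom l₁ x ≠ permAtom l₁ c := (permAtom_injective l₁).ne hxc
  have h₂ : permAtom l₂ x ≠ permAtom l₂ c := (permAtom_injective l₂).ne hxc
  rw [swapAtom_of_ne hxa h₁, swapAtom_of_ne (not_not.1 h₁₂ ▸ hxa) h₂, not_not.1 h₁₂]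

theorem Aeq.perm_right_of_fresh {s u : Term F} {l₁ l₂ : Perm} (h : Aeq Δ s (permTerm l₁ u))
    (hd : ∀ x, permAtom l₁ x ≠ permAtom l₂ x → Fresh Δ x u) : Aeq Δ s (permTerm l₂ u) := by
  induction u using Term.induction_on generalizing s l₁ l₂ with
  | atom c =>
    rw [permTerm_atom] at h ⊢
    cases h
    by_cases hc : permAtom l₁ c = permAtom l₂ c
    · rw [hc]
    · cases hd c hc with | atom hne => exact absurd rfl hne
  | var ρ X =>
    rw [permTerm_var] at h ⊢
    cases h with | var hd' =>
    refine .var fun a ha => ?_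
    by_cases h₁ : permAtom l₁ (permAtom ρ a) = permAtom l₂ (permAtom ρ a)
    · exact hd' a (by rwa [permAtom_append, h₁, ← permAtom_append])
    · cases hd _ h₁ with | var hmem => rwa [permAtom_reverse_permAtom] at hmem
  | fn f us ih =>
    rw [permTerm_fn] at h ⊢
    cases h with | fn hs =>
    rw [List.forall₂_map_right_iff] at hs
    refine .fn (List.forall₂_map_right_iff.2 (hs.imp_of_mem_right fun s u hu hsu => ?_))
    refine ih u hu hsu fun x hx => ?_
    cases hd x hx with | fn hall => exact hall u hu
  | abs c u ih =>
    have hd₀ : ∀ x, x ≠ c → permAtom l₁ x ≠ permAtom l₂ x → Fresh Δ x u := fun x hxc hx => by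
      cases hd x hx with
      | abs_same => exact absurd rfl hxc
      | abs_diff _ hxu => exact hxu
    have hcons : ∀ {s₀ : Term F} {l : Perm} (b : Atom),
        Aeq Δ s₀ (permTerm ((b, b) :: l) u) ↔ Aeq Δ s₀ (permTerm l u) :=
      fun b => ⟨fun h => ih h (by simp [permAtom_cons]), fun h => ih h (by simp [permAtom_cons])⟩
    rw [permTerm_abs] at h ⊢
    obtain ⟨a, s₀, rfl, hs₀, hsrc⟩ : ∃ a s₀, s = .abs a s₀ ∧
        Aeq Δ s₀ (permTerm ((a, permAtom l₁ c) :: l₁) u) ∧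
        (a = permAtom l₁ c ∨ Fresh Δ (permAtom l₁.reverse a) u) := by
      cases h with
      | abs_same h₀ => exact ⟨_, _, rfl, (hcons _).2 h₀, .inl rfl⟩
      | abs_diff _ h₀ hf =>
        rw [permTerm_permTerm] at h₀
        exact ⟨_, _, rfl, h₀, .inr ((fresh_permTerm_iff _ _).1 hf)⟩
    have hs₁ : Aeq Δ s₀ (permTerm ((a, permAtom l₂ c) :: l₂) u) := by
      refine ih hs₀ fun x hx => ?_
      obtain ⟨hxc, h₁₂ | hxa⟩ := permAtom_cons_ne_permAtom_cons hx
      · exact hd₀ x hxc h₁₂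
      · rcases hsrc with rfl | hfa
        · exact absurd ((permAtom_injective l₁) hxa) hxc
        · rwa [← hxa, permAtom_reverse_permAtom] at hfa
    by_cases ha : a = permAtom l₂ c
    · subst ha
      exact .abs_same ((hcons _).1 hs₁)
    refine .abs_diff ha (by rwa [permTerm_permTerm]) ?_
    rw [fresh_permTerm_iff]
    by_cases h₁₂ : permAtom l₁ (permAtom l₂.reverse a) = permAtom l₂ (permAtom l₂.reverse a)
    · rw [permAtom_permAtom_reverse] at h₁₂
      rcases hsrc with rfl | hfa
      · exact absurd (by simpa using congrArg (permAtom l₂) (permAtom_injective l₁ h₁₂)) ha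
      · rwa [← h₁₂, permAtom_reverse_permAtom] at hfa
    · refine hd₀ _ (fun hzc => ha ?_) h₁₂
      rw [← hzc, permAtom_permAtom_reverse]

theorem Aeq.perm {s t : Term F} (h : Aeq Δ s t) (π : Perm) :
    Aeq Δ (permTerm π s) (permTerm π t) := by
  induction h using Aeq.induction with
    simp only [permTerm_atom, permTerm_var, permTerm_fn, permTerm_abs]
  | atom a => exact .refl _
  | var hd =>
    refine .var fun a ha => hd a fun he => ha ?_
    rw [permAtom_append, permAtom_append, he]
  | fn _ ih =>
    refine .fn (List.forall₂_map_left_iff.2 (List.forall₂_map_right_iff.2 ?_))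
    exact ih.imp fun _ _ ⟨_, h⟩ => h
  | abs_same _ ih => exact .abs_same ih
  | @abs_diff a b t s hab _ hf ih =>
    refine .abs_diff ((permAtom_injective π).ne hab) ?_ ?_
    · rw [permTerm_permTerm] at ih ⊢
      refine ih.perm_right_of_fresh fun x hx => absurd ?_ hx
      simp only [permAtom_append, permAtom_singleton, permAtom_swapAtom]
    · rwa [fresh_permTerm_iff, permAtom_reverse_permAtom]

theorem _root_.List.Forall₂.trans_of {α β γ : Type*} {R : α → β → Prop} {S : β → γ → Prop}
    {T : α → γ → Prop} {l₁ : List α} {l₂ : List β} {l₃ : List γ} (h₁ : List.Forall₂ R l₁ l₂)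
    (h₂ : List.Forall₂ S l₂ l₃) (H : ∀ a b c, R a b → S b c → T a c) :
    List.Forall₂ T l₁ l₃ := by
  induction h₁ generalizing l₃ with
  | nil => cases h₂; exact .nil
  | cons hab _ ih => cases h₂ with | cons hbc h₂ => exact .cons (H _ _ _ hab hbc) (ih h₂)

theorem Aeq.trans {s t u : Term F} (h₁ : Aeq Δ s t) (h₂ : Aeq Δ t u) : Aeq Δ s u := by
  induction h₁ using Aeq.induction generalizing u with
  | atom => exact h₂
  | @var π π' X hd =>
    cases h₂ with | var hd' =>
    refine .var fun a ha => ?_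
    by_cases h : permAtom π a = permAtom π' a
    · exact hd' a (h ▸ ha)
    · exact hd a h
  | fn _ ih =>
    cases h₂ with | fn h₂ => exact .fn (ih.trans_of h₂ fun _ _ _ ⟨_, h⟩ h' => h h')
  | abs_same _ ih =>
    cases h₂ with
    | abs_same h' => exact .abs_same (ih h')
    | abs_diff hne h' hf => exact .abs_diff hne (ih h') hf
  | @abs_diff a b t s hab _ hf ih =>
    cases h₂ with
    | abs_same h' => exact .abs_diff hab (ih (h'.perm _)) (h'.fresh hf)
    | @abs_diff _ c _ u hbc h' hbu =>
      have hpu := h'.perm [(a, b)]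
      rw [permTerm_permTerm] at hpu
      by_cases hac : a = c
      · subst hac
        refine .abs_same (ih ?_)
        rw [← permTerm_nil u]
        refine hpu.perm_right_of_fresh fun x hx => absurd ?_ hx
        simp [permAtom_cons, swapAtom_comm b a]
      have hau : Fresh Δ a u := by
        have := (fresh_permTerm_iff _ _).1 (h'.fresh hf)
        rwa [List.reverse_singleton, permAtom_singleton, swapAtom_of_ne hab hac] at this
      refine .abs_diff hac (ih (hpu.perm_right_of_fresh fun x hx => ?_)) hau
      by_cases hxa : x = a
      · rwa [hxa]
      by_cases hxb : x = b
      · rwa [hxb]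
      refine absurd ?_ hx
      simp only [permAtom_append, permAtom_singleton]
      by_cases hxc : x = c
      · subst hxc; simp
      · rw [swapAtom_of_ne hxb hxc, swapAtom_of_ne hxa hxb, swapAtom_of_ne hxa hxc]

theorem Aeq.symm {s t : Term F} (h : Aeq Δ s t) : Aeq Δ t s := by
  induction h using Aeq.induction with
  | atom a => exact .atom a
  | var hd => exact .var fun a ha => hd a (Ne.symm ha)
  | fn _ ih => exact .fn (ih.imp fun _ _ ⟨_, h⟩ => h).flip
  | abs_same _ ih => exact .abs_same ih
  | @abs_diff a b t s hab _ hf ih =>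
    refine .abs_diff (Ne.symm hab) ?_ (ih.fresh ?_)
    · have hs : Aeq Δ s (permTerm ([(b, a)] ++ [(a, b)]) s) := by
        have hs : Aeq Δ s (permTerm [] s) := by rw [permTerm_nil]
        refine hs.perm_right_of_fresh fun x hx => absurd ?_ hx
        simp [permAtom_cons, swapAtom_comm b a]
      rw [← permTerm_permTerm] at hs
      exact hs.trans (ih.perm _)
    · rwa [fresh_permTerm_iff, List.reverse_singleton, permAtom_singleton, swapAtom_snd]

theorem Aeq.replaceAt {p : List ℕ} {s v₁ v₂ s₁ s₂ : Term F} (hv : Aeq Δ v₁ v₂)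
    (h₁ : replaceAt p s v₁ = some s₁) (h₂ : replaceAt p s v₂ = some s₂) : Aeq Δ s₁ s₂ := by
  induction p generalizing s s₁ s₂ with
  | nil => simp_all
  | cons i p ih =>
    match s, i with
    | .atom _, _ | .var _ _, _ | .abs _ _, _ + 1 => simp at h₁
    | .abs a t, 0 =>
      obtain ⟨u₁, hu₁, rfl⟩ := Option.map_eq_some_iff.1 h₁
      obtain ⟨u₂, hu₂, rfl⟩ := Option.map_eq_some_iff.1 h₂
      exact .abs_same (ih hu₁ hu₂)
    | .fn f ts, i =>
      rw [replaceAt_fn_cons] at h₁ h₂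
      obtain ⟨u, hu, h₁⟩ := Option.bind_eq_some_iff.1 h₁
      obtain ⟨u', hu', h₂⟩ := Option.bind_eq_some_iff.1 h₂
      cases hu.symm.trans hu'
      obtain ⟨w₁, hw₁, rfl⟩ := Option.map_eq_some_iff.1 h₁
      obtain ⟨w₂, hw₂, rfl⟩ := Option.map_eq_some_iff.1 h₂
      refine .fn (List.forall₂_iff_get.2 ⟨by simp, fun j hj₁ hj₂ => ?_⟩)
      simp only [List.get_eq_getElem, List.getElem_set]
      split_ifs
      · exact ih hw₁ hw₂
      · exact .refl _

end AlphaEquivalence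

section Substitution

variable {Δ Δ' : Ctx}

theorem Fresh.applySubst {a : Atom} {t : Term F} (h : Fresh Δ a t) {θ : Subst F}
    (hθ : SatCtx Δ' θ Δ) : Fresh Δ' a (applySubst θ t) := by
  induction h with
  | atom hne => rw [applySubst_atom]; exact .atom hne
  | var hmem => rw [applySubst_var]; exact (fresh_permTerm_iff _ _).2 (hθ _ hmem)
  | abs_same => rw [applySubst_abs]; exact .abs_same
  | abs_diff hne _ ih => rw [applySubst_abs]; exact .abs_diff hne ih
  | fn _ ih =>
    rw [applySubst_fn]
    refine .fn fun s hs => ?_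
    obtain ⟨t, ht, rfl⟩ := List.mem_map.1 hs
    exact ih t ht

theorem Aeq.applySubst {s t : Term F} (h : Aeq Δ s t) {θ : Subst F} (hθ : SatCtx Δ' θ Δ) :
    Aeq Δ' (applySubst θ s) (applySubst θ t) := by
  induction h using Aeq.induction with
    simp only [applySubst_atom, applySubst_var, applySubst_fn, applySubst_abs]
  | atom a => exact .atom a
  | @var π π' X hd => exact (Aeq.refl _).perm_right_of_fresh fun a ha => hθ (a, X) (hd a ha)
  | fn _ ih =>
    refine .fn (List.forall₂_map_left_iff.2 (List.forall₂_map_right_iff.2 ?_))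
    exact ih.imp fun _ _ ⟨_, h⟩ => h
  | abs_same _ ih => exact .abs_same ih
  | abs_diff hab _ hf ih =>
    exact .abs_diff hab (by rwa [← applySubst_permTerm]) (hf.applySubst hθ)

theorem fresh_applySubst_of_not_mem {c : Atom} {θ : Subst F} :
    ∀ {t : Term F}, c ∉ t.atoms → (∀ X ∈ t.vars, Fresh Δ c (θ X)) →
      Fresh Δ c (applySubst θ t) := by
  intro t
  induction t using Term.induction_on with
  | atom a => intro hc _; rw [applySubst_atom]; exact .atom (by simpa using hc)
  | var ρ X =>
    intro hc hX
    have hρ : permAtom ρ.reverse c = c := by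
      conv_lhs => rw [← permAtom_eq_self_of_not_mem_atoms hc]
      exact permAtom_reverse_permAtom ρ c
    rw [applySubst_var, fresh_permTerm_iff, hρ]
    exact hX X (by simp)
  | abs a t ih =>
    intro hc hX
    simp only [atoms_abs, Finset.mem_insert, not_or] at hc
    rw [applySubst_abs]
    exact .abs_diff hc.1 (ih hc.2 (by simpa using hX))
  | fn f ts ih =>
    intro hc hX
    rw [applySubst_fn]
    refine .fn fun s hs => ?_
    obtain ⟨t, ht, rfl⟩ := List.mem_map.1 hs
    exact ih t ht (fun h => hc (atoms_subset_atoms_fn ht h))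
      fun X hX' => hX X (vars_subset_vars_fn ht hX')

def suspend (ν : Perm) : Subst F := fun X => .var ν X

theorem permAtom_comm_of_fixes {ν ρ : Perm} {X : Var}
    (hν : ∀ b ∈ (Term.var ρ X : Term F).atoms, permAtom ν b = b) (a : Atom) :
    permAtom ρ (permAtom ν a) = permAtom ν (permAtom ρ a) := by
  by_cases ha : permAtom ν a = a
  · rw [ha]
    rcases permAtom_eq_self_or_mem_atoms ρ X a with h | h
    · rw [h, ha]
    · rw [hν _ h]
  · have hρa : permAtom ρ a = a :=
      permAtom_eq_self_of_not_mem_atoms fun h => ha (hν a h)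
    have hρνa : permAtom ρ (permAtom ν a) = permAtom ν a :=
      permAtom_eq_self_of_not_mem_atoms fun h => ha (permAtom_injective ν (hν _ h))
    rw [hρa, hρνa]

theorem aeq_permTerm_reverse_suspend {ν : Perm} :
    ∀ {t : Term F}, (∀ b ∈ t.atoms, permAtom ν b = b) →
      Aeq Δ t (permTerm ν.reverse (applySubst (suspend ν) t)) := by
  have hrev : ∀ {b}, permAtom ν b = b → permAtom ν.reverse b = b := fun h => by
    conv_lhs => rw [← h]
    exact permAtom_reverse_permAtom ν _
  intro t
  induction t using Term.induction_on with
  | atom a => intro hν; simp only [applySubst_atom, permTerm_atom, hrev (hν a (by simp))]; rfl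
  | var ρ X =>
    intro hν
    simp only [applySubst_var, suspend, permTerm_var]
    refine .var fun a ha => absurd ?_ ha
    rw [permAtom_append, permAtom_append, permAtom_comm_of_fixes hν,
      permAtom_reverse_permAtom]
  | abs a t ih =>
    intro hν
    simp only [applySubst_abs, permTerm_abs, hrev (hν a (by simp))]
    exact .abs_same (ih fun b hb => hν b (by simp [hb]))
  | fn f ts ih =>
    intro hν
    simp only [applySubst_fn, permTerm_fn, List.map_map]
    refine .fn (List.forall₂_map_right_iff.2 (List.forall₂_same.2 fun t ht => ?_))
    exact ih t ht fun b hb => hν b (atoms_subset_atoms_fn ht hb)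

end Substitution

section Renaming

variable {E : Set (Rule F)}

def EqStepIn (E : Set (Rule F)) (Δ' : Ctx) (s t : Term F) : Prop :=
  ∃ ax ∈ E, ∃ (p : List ℕ) (θ : Subst F) (w w' : Term F),
    SatCtx Δ' θ ax.1 ∧ subtermAt p w = some (applySubst θ ax.2.1) ∧ Aeq Δ' s w ∧
    replaceAt p w (applySubst θ ax.2.2) = some w' ∧ Aeq Δ' w' t

theorem mem_ctxAtoms {Δ : Ctx} {a : Atom} {X : Var} (h : (a, X) ∈ Δ) : a ∈ ctxAtoms Δ :=
  Finset.mem_image_of_mem Prod.fst h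

theorem mem_ctxVars {Δ : Ctx} {a : Atom} {X : Var} (h : (a, X) ∈ Δ) : X ∈ ctxVars Δ :=
  Finset.mem_image_of_mem Prod.snd h

theorem eqStep_iff {Δ : Ctx} {s t : Term F} : EqStep E Δ s t ↔
    ∃ Γ : Ctx, (∀ c ∈ Γ, c.1 ∉ ctxAtoms Δ ∪ s.atoms ∪ t.atoms) ∧ EqStepIn E (Δ ∪ Γ) s t :=
  ⟨fun ⟨ax, hax, p, θ, Γ, w, w', hΓ, h⟩ => ⟨Γ, hΓ, ax, hax, p, θ, w, w', h⟩,
    fun ⟨Γ, hΓ, ax, hax, p, θ, w, w', h⟩ => ⟨ax, hax, p, θ, Γ, w, w', hΓ, h⟩⟩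

theorem EqStepIn.transport (hEeqv : Equivariant E) {Δ₀ Δ₁ : Ctx} {x y : Term F} {ν : Perm}
    (hω : SatCtx Δ₁ (suspend (F := F) ν) Δ₀) (hx : ∀ a ∈ x.atoms, permAtom ν a = a)
    (hy : ∀ a ∈ y.atoms, permAtom ν a = a) {ax : Rule F} (hax : ax ∈ E) {q : List ℕ}
    {θ : Subst F} {w w' : Term F}
    (hsat : SatCtx Δ₁ (fun X => applySubst (suspend ν) (θ X)) (permCtx ν.reverse ax.1))
    (hsub : subtermAt q w = some (applySubst θ ax.2.1)) (hxw : Aeq Δ₀ x w)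
    (hrep : replaceAt q w (applySubst θ ax.2.2) = some w') (hw'y : Aeq Δ₀ w' y) :
    EqStepIn E Δ₁ x y := by
  set g : Term F → Term F := fun t => permTerm ν.reverse (applySubst (suspend ν) t)
  have hg : PreservesShape g := (preservesShape_permTerm _).comp (preservesShape_applySubst _)
  have hgθ : ∀ t, g (applySubst θ t) =
      applySubst (fun X => applySubst (suspend ν) (θ X)) (permTerm ν.reverse t) := by
    intro t
    simp only [g, applySubst_permTerm, applySubst_applySubst]
  refine ⟨permRule ν.reverse ax, hEeqv _ ax hax, q, _, g w, g w', hsat, ?_,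
    (aeq_permTerm_reverse_suspend hx).trans ((hxw.applySubst hω).perm _), ?_,
    ((hw'y.applySubst hω).perm _).trans (aeq_permTerm_reverse_suspend hy).symm⟩
  · rw [permRule, ← hgθ]
    exact hg.subtermAt hsub
  · rw [permRule, ← hgθ]
    exact hg.replaceAt hrep

/-- The cycle `b ↦ c₁ ↦ c₂ ↦ b`. -/
def threeCycle (b c₁ c₂ : Atom) : Perm := [(b, c₂), (b, c₁)]

theorem permAtom_threeCycle {b c₁ c₂ : Atom} (h₂ : c₂ ≠ b) (h₁₂ : c₁ ≠ c₂) :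
    permAtom (threeCycle b c₁ c₂).reverse b = c₂ ∧
      permAtom (threeCycle b c₁ c₂).reverse c₂ = c₁ ∧
      ∀ a, a ≠ b → a ≠ c₁ → a ≠ c₂ →
        permAtom (threeCycle b c₁ c₂) a = a ∧ permAtom (threeCycle b c₁ c₂).reverse a = a := by
  simp only [threeCycle, List.reverse_cons, List.reverse_nil, List.nil_append, List.cons_append,
    permAtom_cons, permAtom_nil]
  refine ⟨?_, ?_, fun a ha ha₁ ha₂ => ?_⟩
  · rw [swapAtom_fst, swapAtom_of_ne h₂ h₁₂.symm]
  · rw [swapAtom_snd, swapAtom_fst]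
  · simp [swapAtom_of_ne ha ha₁, swapAtom_of_ne ha ha₂]

theorem satCtx_suspend_threeCycle {Δ Γ : Ctx} {b c₁ c₂ : Atom} {V : Finset Var}
    (hb : b ∉ ctxAtoms Δ) (h₂ : c₂ ≠ b) (h₁₂ : c₁ ≠ c₂)
    (hc : ∀ a ∈ ctxAtoms Δ ∪ ctxAtoms Γ, a ≠ c₁ ∧ a ≠ c₂) (hV : ctxVars Γ ⊆ V) :
    SatCtx (Δ ∪ (Γ.filter (·.1 ≠ b) ∪ {c₁, c₂} ×ˢ V)) (suspend (F := F) (threeCycle b c₁ c₂))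
      (Δ ∪ Γ) := by
  obtain ⟨hνb, -, hνfix⟩ := permAtom_threeCycle (b := b) h₂ h₁₂
  rintro ⟨a, X⟩ hmem
  refine .var ?_
  by_cases hab : a = b
  · subst hab
    rw [hνb]
    have hXΓ : (a, X) ∈ Γ := (Finset.mem_union.1 hmem).resolve_left fun h => hb (mem_ctxAtoms h)
    exact Finset.mem_union_right _ (Finset.mem_union_right _
      (Finset.mem_product.2 ⟨by simp, hV (mem_ctxVars hXΓ)⟩))
  · have haΔΓ : a ∈ ctxAtoms Δ ∪ ctxAtoms Γ := by
      rcases Finset.mem_union.1 hmem with h | h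
      · exact Finset.mem_union_left _ (mem_ctxAtoms h)
      · exact Finset.mem_union_right _ (mem_ctxAtoms h)
    rw [(hνfix a hab (hc a haΔΓ).1 (hc a haΔΓ).2).2]
    rcases Finset.mem_union.1 hmem with h | h
    · exact Finset.mem_union_left _ h
    · exact Finset.mem_union_right _ (Finset.mem_union_left _ (Finset.mem_filter.2 ⟨h, hab⟩))

theorem EqStepIn.rename {Δ Γ : Ctx} {x y : Term F} (hEeqv : Equivariant E)
    (h : EqStepIn E (Δ ∪ Γ) x y) {b : Atom} (hb : b ∉ ctxAtoms Δ ∪ x.atoms ∪ y.atoms)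
    (A : Finset Atom) : ∃ Γ' : Ctx, EqStepIn E (Δ ∪ Γ') x y ∧
      ∀ c ∈ Γ', (c ∈ Γ ∧ c.1 ≠ b) ∨ c.1 ∉ A := by
  classical
  obtain ⟨ax, hax, q, θ, w, w', hsat, hsub, hxw, hrep, hw'y⟩ := h
  set B : Finset Atom := A ∪ {b} ∪ ctxAtoms Δ ∪ ctxAtoms Γ ∪ x.atoms ∪ y.atoms ∪ ruleAtoms ax ∪
    (ctxVars ax.1).biUnion fun X => (θ X).atoms
  obtain ⟨c₁, hc₁⟩ := Infinite.exists_notMem_finset B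
  obtain ⟨c₂, hc₂⟩ := Infinite.exists_notMem_finset (insert c₁ B)
  have hB : ∀ {z}, z ∈ B → z ≠ c₁ ∧ z ≠ c₂ := fun hz =>
    ⟨ne_of_mem_of_not_mem hz hc₁, ne_of_mem_of_not_mem (Finset.mem_insert_of_mem hz) hc₂⟩
  have hc₁₂ : c₁ ≠ c₂ := ne_of_mem_of_not_mem (Finset.mem_insert_self _ _) hc₂
  have hc₂b : c₂ ≠ b := (hB (by simp [B])).2.symm
  set V : Finset Var := ctxVars Γ ∪ (ctxVars ax.1).biUnion fun X => (θ X).vars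
  have hω : SatCtx (Δ ∪ (Γ.filter (·.1 ≠ b) ∪ {c₁, c₂} ×ˢ V))
      (suspend (F := F) (threeCycle b c₁ c₂)) (Δ ∪ Γ) :=
    satCtx_suspend_threeCycle (fun h => hb (by simp [h])) hc₂b hc₁₂
      (fun a ha => hB (by simp only [B, Finset.mem_union] at ha ⊢; tauto)) Finset.subset_union_left
  obtain ⟨hνb, hνc₂, hνfix⟩ := permAtom_threeCycle (b := b) hc₂b hc₁₂
  have hνt : ∀ {t : Term F}, t.atoms ⊆ B → b ∉ t.atoms →
      ∀ a ∈ t.atoms, permAtom (threeCycle b c₁ c₂) a = a := fun htB hbt a ha =>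
    (hνfix a (ne_of_mem_of_not_mem ha hbt) (hB (htB ha)).1 (hB (htB ha)).2).1
  have hxB : x.atoms ⊆ B := fun z hz => by simp [B, hz]
  have hyB : y.atoms ⊆ B := fun z hz => by simp [B, hz]
  refine ⟨_, EqStepIn.transport hEeqv hω (hνt hxB fun h => hb (by simp [h]))
    (hνt hyB fun h => hb (by simp [h])) hax ?_ hsub hxw hrep hw'y, fun c hc => ?_⟩
  · rintro _ hp
    obtain ⟨⟨a, X⟩, hmem, rfl⟩ := Finset.mem_image.1 hp
    have hXv : X ∈ ctxVars ax.1 := mem_ctxVars hmem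
    by_cases hab : a = b
    · subst hab
      dsimp only
      rw [hνb]
      refine fresh_applySubst_of_not_mem (fun h => (hB ?_).2 rfl) fun Y hY => .var ?_
      · exact Finset.mem_union_right _ (Finset.mem_biUnion.2 ⟨X, hXv, h⟩)
      · rw [hνc₂]
        exact Finset.mem_union_right _ (Finset.mem_union_right _ (Finset.mem_product.2
          ⟨by simp, Finset.mem_union_right _ (Finset.mem_biUnion.2 ⟨X, hXv, hY⟩)⟩))
    · have haB : a ∈ B := by simp [B, ruleAtoms, mem_ctxAtoms hmem]
      dsimp only
      rw [(hνfix a hab (hB haB).1 (hB haB).2).2]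
      exact (hsat _ hmem).applySubst hω
  · rcases Finset.mem_union.1 hc with h | h
    · exact .inl (Finset.mem_filter.1 h)
    · refine .inr fun hA => ?_
      have hcB : c.1 ∈ B := by simp [B, hA]
      rcases Finset.mem_insert.1 (Finset.mem_product.1 h).1 with h₁ | h₁
      · exact (hB hcB).1 h₁
      · exact (hB hcB).2 (Finset.mem_singleton.1 h₁)

theorem EqStep.exists_avoiding (hEeqv : Equivariant E) {Δ : Ctx} {x y : Term F}
    (h : EqStep E Δ x y) (A : Finset Atom) : ∃ Γ : Ctx,
      (∀ c ∈ Γ, c.1 ∉ ctxAtoms Δ ∪ x.atoms ∪ y.atoms ∪ A) ∧ EqStepIn E (Δ ∪ Γ) x y := by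
  classical
  obtain ⟨Γ, hΓ, hstep⟩ := eqStep_iff.1 h
  induction hn : (ctxAtoms Γ ∩ A).card using Nat.strong_induction_on generalizing Γ with
  | _ n ih =>
  by_cases hA : ctxAtoms Γ ∩ A = ∅
  · refine ⟨Γ, fun c hc hcA => ?_, hstep⟩
    rcases Finset.mem_union.1 hcA with h | h
    · exact hΓ c hc h
    · exact Finset.eq_empty_iff_forall_notMem.1 hA c.1
        (Finset.mem_inter.2 ⟨mem_ctxAtoms (X := c.2) hc, h⟩)
  obtain ⟨b, hb⟩ := Finset.nonempty_iff_ne_empty.2 hA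
  obtain ⟨hbΓ, -⟩ := Finset.mem_inter.1 hb
  obtain ⟨cb, hcb, rfl⟩ := Finset.mem_image.1 hbΓ
  obtain ⟨Γ', hstep', hΓ'⟩ :=
    hstep.rename hEeqv (hΓ cb hcb) (A ∪ (ctxAtoms Δ ∪ x.atoms ∪ y.atoms))
  have hsub : ctxAtoms Γ' ∩ A ⊆ (ctxAtoms Γ ∩ A).erase cb.1 := by
    intro z hz
    obtain ⟨hzΓ', hzA⟩ := Finset.mem_inter.1 hz
    obtain ⟨c, hc, rfl⟩ := Finset.mem_image.1 hzΓ'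
    rcases hΓ' c hc with ⟨hcΓ, hcb⟩ | hcA
    · exact Finset.mem_erase.2 ⟨hcb, Finset.mem_inter.2 ⟨mem_ctxAtoms (X := c.2) hcΓ, hzA⟩⟩
    · exact absurd (Finset.mem_union_left _ hzA) hcA
  refine ih _ ?_ Γ' (fun c hc => ?_) hstep' rfl
  · exact hn ▸ (Finset.card_le_card hsub).trans_lt (Finset.card_erase_lt_of_mem hb)
  · rcases hΓ' c hc with ⟨hcΓ, -⟩ | hcA
    · exact hΓ c hcΓ
    · exact fun h => hcA (Finset.mem_union_right _ h)

end Renaming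

section EquationalTheory

variable {E : Set (Rule F)} {Δ : Ctx}

theorem EqStep.congr (hEeqv : Equivariant E) {x y s s' : Term F} {p : List ℕ}
    (h : EqStep E Δ x y) (hsub : subtermAt p s = some x) (hrep : replaceAt p s y = some s') :
    EqStep E Δ s s' := by
  obtain ⟨Γ, hΓ, ax, hax, q, θ, w, w', hsat, hw, hxw, hq, hw'y⟩ :=
    h.exists_avoiding hEeqv (s.atoms ∪ s'.atoms)
  obtain ⟨W, hW⟩ := exists_replaceAt hsub w
  obtain ⟨W', hW'⟩ := exists_replaceAt hsub w'
  refine eqStep_iff.2 ⟨Γ, fun c hc => ?_, ax, hax, p ++ q, θ, W, W', hsat, ?_,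
    hxw.replaceAt (replaceAt_self hsub) hW, replaceAt_append (subtermAt_replaceAt hW) hq ?_,
    hw'y.replaceAt hW' hrep⟩
  · have := hΓ c hc
    simp only [Finset.mem_union, not_or] at this ⊢
    tauto
  · rw [subtermAt_append, subtermAt_replaceAt hW]
    exact hw
  · rw [replaceAt_replaceAt hW]
    exact hW'

theorem EqStep.symm (hEsymm : SymmClosed E) {s t : Term F} (h : EqStep E Δ s t) :
    EqStep E Δ t s := by
  obtain ⟨ax, hax, p, θ, Γ, w, w', hΓ, hsat, hsub, hsw, hrep, hw't⟩ := h
  refine ⟨(ax.1, ax.2.2, ax.2.1), hEsymm ax hax, p, θ, Γ, w', w, fun c hc => ?_, hsat,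
    subtermAt_replaceAt hrep, hw't.symm, ?_, hsw.symm⟩
  · have := hΓ c hc
    simp only [Finset.mem_union, not_or] at this ⊢
    tauto
  · rw [replaceAt_replaceAt hrep]
    exact replaceAt_self hsub

theorem eqE_equivalence (hEsymm : SymmClosed E) (Δ : Ctx) : Equivalence (EqE E Δ) where
  refl _ := .refl
  symm h := by
    induction h with
    | refl => exact .refl
    | tail _ hst ih => exact .head (hst.imp (EqStep.symm hEsymm) Aeq.symm) ih
  trans := Relation.ReflTransGen.trans

theorem EqE.congr (hEeqv : Equivariant E) {x y : Term F} (h : EqE E Δ x y) :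
    ∀ {s s' : Term F} {p : List ℕ}, subtermAt p s = some x → replaceAt p s y = some s' →
      EqE E Δ s s' := by
  induction h using Relation.ReflTransGen.head_induction_on with
  | refl =>
    intro s s' p hsub hrep
    rw [replaceAt_self hsub, Option.some_inj] at hrep
    exact hrep ▸ .refl
  | @head x z hxz _ ih =>
    intro s s' p hsub hrep
    obtain ⟨sz, hsz⟩ := exists_replaceAt hsub z
    refine .head (hxz.imp (fun h => h.congr hEeqv hsub hsz)
      fun h => h.replaceAt (replaceAt_self hsub) hsz) (ih (subtermAt_replaceAt hsz) ?_)
    rwa [replaceAt_replaceAt hsz]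

end EquationalTheory

section Rewriting

variable {R E : Set (Rule F)} {Δ : Ctx} {s t : Term F}

theorem RewR.rewRE (h : RewR R Δ s t) : RewRE R E Δ s t :=
  let ⟨r, hr, p, s', u, θ, h₁, h₂, h₃, h₄, h₅⟩ := h
  ⟨r, hr, p, s', u, θ, h₁, h₂, .single (.inr h₃), h₄, h₅⟩

theorem RewRE.rewRmodE (hEeqv : Equivariant E) (h : RewRE R E Δ s t) : RewRmodE R E Δ s t := by
  obtain ⟨r, hr, p, s', u, θ, hsub, hsat, hmatch, hrep, hu⟩ := h
  obtain ⟨s₁, hs₁⟩ := exists_replaceAt hsub (applySubst θ r.2.1)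
  refine ⟨s₁, t, hmatch.congr hEeqv hsub hs₁,
    ⟨r, hr, p, _, u, θ, subtermAt_replaceAt hs₁, hsat, .refl _, ?_, hu⟩, .refl⟩
  rwa [replaceAt_replaceAt hs₁]

theorem wellFounded_rewRmodE (hterm : ETerminating R E) (Δ : Ctx) :
    WellFounded (flip (RewRmodE R E Δ)) :=
  wellFounded_iff_isEmpty_descending_chain.2 ⟨fun ⟨f, hf⟩ => hterm Δ ⟨f, hf⟩⟩

end Rewriting

theorem nominal_E_coherence_general (R E : Set (Rule F))
    (hEeqv : Equivariant E) (hEsymm : SymmClosed E)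
    (hterm : ETerminating R E) (hconf : EConfluentRE R E) :
    ((∀ (Δ : Ctx) (t u v : Term F),
        Relation.ReflTransGen (RewRE R E Δ) t u → NFRE R E Δ u →
        Relation.ReflTransGen (RewRmodE R E Δ) t v → NFRmodE R E Δ v →
        EqE E Δ u v)
      ↔ ECoherent R E) :=
  forall_congr' fun Δ => normalForms_related_iff_coherentModulo (eqE_equivalence hEsymm Δ)
    RewR.rewRE (RewRE.rewRmodE hEeqv) (wellFounded_rewRmodE hterm Δ) (hconf Δ)

/-- **Nominal E-coherence theorem**: if `R` is E-terminating and `R,E` is E-confluent,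
then for every term-in-context the `R,E`- and `R/E`-normal forms are E-equal
iff `→R,E` is E-coherent. -/
theorem nominal_E_coherence (R E : Set (Rule F))
    (hReqv : Equivariant R) (hEeqv : Equivariant E) (hEsymm : SymmClosed E)
    (hterm : ETerminating R E) (hconf : EConfluentRE R E) :
    ((∀ (Δ : Ctx) (t u v : Term F),
        Relation.ReflTransGen (RewRE R E Δ) t u → NFRE R E Δ u →
        Relation.ReflTransGen (RewRmodE R E Δ) t v → NFRmodE R E Δ v →
        EqE E Δ u v)
      ↔ ECoherent R E) :=
  nominal_E_coherence_general R E hEeqv hEsymm hterm hconf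

end NominalNarrowing
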